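/- arXiv:1002.1377 — 8 statements merged into one kernel-verified Lean document; each statement's English description precedes it below -/
import Mathlib

section
/- Let T be the infinite binary tree (finite binary strings), with |t| the level (length) of a node t, and weight w(t) = (1+|t|)^{-β} with 1 < β < 2. Let V* : ℓ₁(T) → ℓ₂(T,W) be the operator (V*μ)(t) = Σ_{u ⪰ t} μ(u), where u ⪰ t means t is an ancestor of u (t is a prefix of u, including u = t), and ℓ₂(T,W) carries the norm ‖f‖²_{2,W} = Σ_{t∈T} w(t) f(t)². Then there exists a constant C₂ = C₂(β) > 0 such that for all positive integers n, the n-th dyadic entropy number satisfies e_n(V*) ≤ C₂ · n^{-(β-1)/2}. -/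
/-!
`V*μ = ∑ u, μ(u) a_u`, where the column `a_u` is the indicator of the ancestors of `u`, so `V*`
maps the unit ball of `ℓ₁(T)` into the closed absolutely convex hull of its columns. In `ℓ₂(T,W)`
the part of a column on the levels `≥ M` has squared norm at most
`∑_{j ≥ M} (1 + j)^{-β} ≲ M^{1-β}`, so cutting `T` at level `m = 2^L` costs `≲ m^{-(β-1)/2}`.
Split the levels `< m` into the dyadic blocks `{0}, [1, 2), [2, 4), …, [2^{L-1}, 2^L)`. The part
of a column in block `i` depends only on the first `2^i` letters of `u`, so there are at most
`2^{2^i+1}` of them, each of norm `≲ 2^{-i(β-1)/2}`, and Maurey's lemma approximates the block-`i`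
part of `V*μ` by an average of `k_i` of them (or their negatives) with error
`≲ 2^{-i(β-1)/2} / √k_i`. Taking `k_i ≈ 2^{β(L-i)/2}` uses `≲ 2^L` bits in total and leaves a
total error `≲ 2^{-L(β-1)/2}`; this is the bound for `n ≈ 2^L`, and the other `n` follow by
monotonicity.
-/

open scoped ENNReal

/-- A node of the infinite binary tree `T` is a finite binary string;
its level `|t|` is its length. -/
abbrev Node : Type := List Bool

/-- `μ` belongs to `ℓ₁(T)`, i.e. `Σ_t |μ(t)| < ∞`. -/
def MemL1 (μ : Node → ℝ) : Prop := Summable fun t : Node => |μ t|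

/-- The `ℓ₁(T)` norm `‖μ‖₁ = Σ_t |μ(t)|`. -/
noncomputable def l1Norm (μ : Node → ℝ) : ℝ := ∑' t : Node, |μ t|

/-- `(V*μ)(t) = Σ_{u ⪰ t} μ(u)`, the sum over all nodes `u` having `t` as a prefix
(including `u = t`). -/
noncomputable def Vstar (μ : Node → ℝ) (t : Node) : ℝ := ∑' u : {u : Node // t <+: u}, μ u.1

/-- The weight `w(t) = (1 + |t|)^{-β}`. -/
noncomputable def wgt (β : ℝ) (t : Node) : ℝ := ((1 : ℝ) + (t.length : ℝ)) ^ (-β)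

/-- The squared distance of `f, g` in the weighted space `ℓ₂(T,W)`,
`Σ_t w(t) (f(t) - g(t))²`, computed in `ℝ≥0∞`. -/
noncomputable def distSqW (β : ℝ) (f g : Node → ℝ) : ℝ≥0∞ :=
  ∑' t : Node, ENNReal.ofReal (wgt β t * (f t - g t) ^ 2)


open Finset
open scoped Pointwise

namespace Entropy

section Maurey

lemma card_insert_zero_union_neg_le {α : Type*} [DecidableEq α] [Zero α] [InvolutiveNeg α]
    (A : Finset α) : #(insert 0 (A ∪ -A)) ≤ 2 * #A + 1 :=
  (card_insert_le _ _).trans (by have := card_union_le A (-A); rw [card_neg] at this; omega)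

variable {V : Type*} [NormedAddCommGroup V]

lemma norm_le_of_mem_insert_zero_union_neg [DecidableEq V] {A : Finset V} {r : ℝ} (hr : 0 ≤ r)
    (hA : ∀ a ∈ A, ‖a‖ ≤ r) : ∀ s ∈ insert 0 (A ∪ -A), ‖s‖ ≤ r := by
  intro s hs
  rcases mem_insert.1 hs with rfl | hs
  · simpa using hr
  rcases mem_union.1 hs with hs | hs
  · exact hA s hs
  · simpa using hA (-s) (mem_neg'.1 hs)

variable [InnerProductSpace ℝ V]

open scoped Classical in
noncomputable def averages (S : Finset V) (k : ℕ) : Finset V :=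
  (Fintype.piFinset fun _ : Fin k => S).image fun f => (k : ℝ)⁻¹ • ∑ j, f j

lemma card_averages_le (S : Finset V) (k : ℕ) : #(averages S k) ≤ #S ^ k := by
  classical exact card_image_le.trans (by simp)

lemma exists_norm_add_sub_sq_le {S : Finset V} {x : V} (hx : x ∈ convexHull ℝ (S : Set V))
    {r : ℝ} (hS : ∀ s ∈ S, ‖s‖ ≤ r) (y : V) : ∃ s ∈ S, ‖y + s - x‖ ^ 2 ≤ ‖y‖ ^ 2 + r ^ 2 := by
  obtain ⟨w, hw0, hw1, hwx⟩ := Finset.mem_convexHull'.1 hx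
  obtain ⟨s₀, hs₀, hmin⟩ := S.exists_min_image (fun s => ‖y + s - x‖ ^ 2)
    (nonempty_of_sum_ne_zero (hw1 ▸ one_ne_zero))
  refine ⟨s₀, hs₀, ?_⟩
  -- The `w`-average of `‖y + s - x‖²` is `‖y‖² - ‖x‖² + ∑ w s ‖s‖²`, and the minimum is below it.
  have hinner : ∑ s ∈ S, w s * inner ℝ (y - x) s = inner ℝ (y - x) x := by
    simp only [← hwx, inner_sum, real_inner_smul_right]
  have hpolar : ‖y - x‖ ^ 2 + 2 * inner ℝ (y - x) x = ‖y‖ ^ 2 - ‖x‖ ^ 2 := by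
    have := norm_add_sq_real (y - x) x
    rw [sub_add_cancel] at this
    linarith
  have havg : ∑ s ∈ S, w s * ‖y + s - x‖ ^ 2 = ‖y‖ ^ 2 - ‖x‖ ^ 2 + ∑ s ∈ S, w s * ‖s‖ ^ 2 := by
    have hterm : ∀ s, w s * ‖y + s - x‖ ^ 2 =
        ‖y - x‖ ^ 2 * w s + 2 * (w s * inner ℝ (y - x) s) + w s * ‖s‖ ^ 2 := fun s => by
      rw [show y + s - x = (y - x) + s by abel, norm_add_sq_real]; ring
    simp only [hterm, sum_add_distrib, ← mul_sum, hw1, hinner]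
    linarith
  have hr : ∑ s ∈ S, w s * ‖s‖ ^ 2 ≤ r ^ 2 :=
    calc ∑ s ∈ S, w s * ‖s‖ ^ 2 ≤ ∑ s ∈ S, w s * r ^ 2 :=
          sum_le_sum fun s hs => mul_le_mul_of_nonneg_left
            (pow_le_pow_left₀ (norm_nonneg s) (hS s hs) 2) (hw0 s hs)
      _ = r ^ 2 := by rw [← sum_mul, hw1, one_mul]
  calc ‖y + s₀ - x‖ ^ 2 = ∑ s ∈ S, w s * ‖y + s₀ - x‖ ^ 2 := by rw [← sum_mul, hw1, one_mul]
    _ ≤ ∑ s ∈ S, w s * ‖y + s - x‖ ^ 2 :=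
        sum_le_sum fun s hs => mul_le_mul_of_nonneg_left (hmin s hs) (hw0 s hs)
    _ ≤ ‖y‖ ^ 2 + r ^ 2 := by rw [havg]; nlinarith [sq_nonneg ‖x‖]

lemma exists_norm_sum_sub_smul_sq_le {S : Finset V} {x : V} (hx : x ∈ convexHull ℝ (S : Set V))
    {r : ℝ} (hS : ∀ s ∈ S, ‖s‖ ≤ r) (k : ℕ) :
    ∃ f : Fin k → V, (∀ j, f j ∈ S) ∧ ‖∑ j, f j - (k : ℝ) • x‖ ^ 2 ≤ k * r ^ 2 := by
  induction k with
  | zero => exact ⟨Fin.elim0, fun j => j.elim0, by simp⟩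
  | succ k ih =>
    obtain ⟨f, hfS, hf⟩ := ih
    obtain ⟨s, hs, hsf⟩ := exists_norm_add_sub_sq_le hx hS (∑ j, f j - (k : ℝ) • x)
    refine ⟨Fin.cons s f, Fin.cases hs hfS, ?_⟩
    rw [Fin.sum_cons, Nat.cast_succ, add_smul, one_smul,
      show s + ∑ j, f j - ((k : ℝ) • x + x) = ∑ j, f j - (k : ℝ) • x + s - x by abel]
    linarith

-- Maurey's empirical approximation lemma.
theorem exists_mem_averages_norm_sub_le {S : Finset V} {x : V}
    (hx : x ∈ convexHull ℝ (S : Set V)) {r : ℝ} (hS : ∀ s ∈ S, ‖s‖ ≤ r) {k : ℕ} (hk : 0 < k) :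
    ∃ g ∈ averages S k, ‖x - g‖ ≤ r / √k := by
  classical
  obtain ⟨f, hfS, hf⟩ := exists_norm_sum_sub_smul_sq_le hx hS k
  obtain ⟨s, hs⟩ : S.Nonempty := nonempty_iff_ne_empty.2 (by rintro rfl; simp at hx)
  have hr : 0 ≤ r := (norm_nonneg s).trans (hS s hs)
  have hk' : (0 : ℝ) < k := by exact_mod_cast hk
  refine ⟨(k : ℝ)⁻¹ • ∑ j, f j, mem_image.2 ⟨f, Fintype.mem_piFinset.2 hfS, rfl⟩, ?_⟩
  have hnorm : ‖∑ j, f j - (k : ℝ) • x‖ ≤ √k * r := by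
    rw [← Real.sqrt_sq (norm_nonneg _), ← Real.sqrt_sq hr, ← Real.sqrt_mul hk'.le]
    exact Real.sqrt_le_sqrt hf
  rw [show x - (k : ℝ)⁻¹ • ∑ j, f j = -((k : ℝ)⁻¹ • (∑ j, f j - (k : ℝ) • x)) by
      rw [smul_sub, inv_smul_smul₀ hk'.ne']; abel,
    norm_neg, norm_smul, Real.norm_of_nonneg (inv_nonneg.2 hk'.le)]
  calc (k : ℝ)⁻¹ * ‖∑ j, f j - (k : ℝ) • x‖ ≤ (k : ℝ)⁻¹ * (√k * r) := by gcongr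
    _ = r / √k := by field_simp; rw [Real.sq_sqrt hk'.le]

lemma sum_smul_mem_convexHull {ι : Type*} [DecidableEq V] (A : Finset V) (I : Finset ι)
    {c : ι → ℝ} (hc : ∑ i ∈ I, |c i| ≤ 1) {z : ι → V} (hz : ∀ i ∈ I, z i ∈ A) :
    ∑ i ∈ I, c i • z i ∈ convexHull ℝ (↑(insert 0 (A ∪ -A)) : Set V) := by
  set K := convexHull ℝ (↑(insert 0 (A ∪ -A)) : Set V)
  have hK : Convex ℝ K := convex_convexHull ℝ _
  have h0 : (0 : V) ∈ K := subset_convexHull ℝ _ (by simp)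
  set z' : ι → V := fun i => if 0 ≤ c i then z i else -z i
  have hz' : ∀ i ∈ I, z' i ∈ K := fun i hi => subset_convexHull ℝ _ <| by
    by_cases h : 0 ≤ c i <;> simp [z', h, hz i hi]
  have hcz : ∑ i ∈ I, c i • z i = ∑ i ∈ I, |c i| • z' i := sum_congr rfl fun i _ => by
    by_cases h : 0 ≤ c i
    · simp [z', h, abs_of_nonneg h]
    · simp [z', h, abs_of_neg (not_le.1 h)]
  rw [hcz]
  rcases (sum_nonneg fun i _ => abs_nonneg (c i) : 0 ≤ ∑ i ∈ I, |c i|).eq_or_lt with hT | hT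
  · rw [sum_eq_zero fun i hi => by
      rw [(sum_eq_zero_iff_of_nonneg fun i _ => abs_nonneg (c i)).1 hT.symm i hi, zero_smul]]
    exact h0
  · -- a convex combination of the `z' i`, scaled towards `0 ∈ K`
    rw [← smul_inv_smul₀ hT.ne' (∑ i ∈ I, |c i| • z' i)]
    exact hK.smul_mem_of_zero_mem h0
      (hK.centerMass_mem (fun i _ => abs_nonneg (c i)) hT hz') ⟨hT.le, hc⟩

lemma tsum_smul_mem_convexHull {ι : Type*} [CompleteSpace V] [DecidableEq V] (A : Finset V)
    {c : ι → ℝ} (hc : Summable fun i => |c i|) (hc1 : ∑' i, |c i| ≤ 1) {z : ι → V}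
    (hz : ∀ i, z i ∈ A) :
    ∑' i, c i • z i ∈ convexHull ℝ (↑(insert 0 (A ∪ -A)) : Set V) := by
  have hsum : Summable fun i => c i • z i :=
    Summable.of_norm_bounded (hc.mul_right (∑ a ∈ A, ‖a‖)) fun i => by
      rw [norm_smul, Real.norm_eq_abs]
      exact mul_le_mul_of_nonneg_left (single_le_sum (fun a _ => norm_nonneg a) (hz i))
        (abs_nonneg _)
  exact ((finite_toSet _).isClosed_convexHull ℝ).mem_of_tendsto hsum.hasSum
    (Filter.Eventually.of_forall fun I => sum_smul_mem_convexHull A I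
      ((hc.sum_le_tsum I fun i _ => abs_nonneg _).trans hc1) fun i _ => hz i)

end Maurey

section Arithmetic

lemma sum_range_pow_sub_le {q : ℝ} (hq0 : 0 ≤ q) (hq1 : q < 1) (L : ℕ) :
    ∑ i ∈ range (L + 1), q ^ (L - i) ≤ (1 - q)⁻¹ := by
  have h := sum_range_reflect (fun i => q ^ i) (L + 1)
  simp only [add_tsub_cancel_right] at h
  rw [h, range_eq_Ico]
  simpa using geom_sum_Ico_le_of_lt_one (m := 0) (n := L + 1) hq0 hq1

lemma sum_two_pow_mul_ceil_le {c : ℝ} (hc1 : 1 ≤ c) (hc2 : c < 2) (L : ℕ) :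
    ∑ i ∈ range (L + 1), 2 ^ (i + 2) * ⌈c ^ (L - i)⌉₊ ≤ ⌈8 * (1 - c / 2)⁻¹⌉₊ * 2 ^ L := by
  have hterm : ∀ i ∈ range (L + 1),
      ((2 ^ (i + 2) * ⌈c ^ (L - i)⌉₊ : ℕ) : ℝ) ≤ 8 * 2 ^ L * (c / 2) ^ (L - i) := by
    intro i hi
    have hiL : i + (L - i) = L := by have := mem_range.1 hi; omega
    have hc : (⌈c ^ (L - i)⌉₊ : ℝ) ≤ 2 * c ^ (L - i) := by
      have := Nat.ceil_lt_add_one (pow_nonneg (zero_le_one.trans hc1) (L - i))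
      have := one_le_pow₀ hc1 (n := L - i)
      linarith
    calc ((2 ^ (i + 2) * ⌈c ^ (L - i)⌉₊ : ℕ) : ℝ) ≤ 2 ^ (i + 2) * (2 * c ^ (L - i)) := by
          push_cast; gcongr
      _ = 8 * 2 ^ L * (c / 2) ^ (L - i) := by
          rw [← hiL, pow_add, div_pow, Nat.add_sub_cancel_left]; field_simp; ring
  rw [← Nat.cast_le (α := ℝ), Nat.cast_sum]
  calc ∑ i ∈ range (L + 1), ((2 ^ (i + 2) * ⌈c ^ (L - i)⌉₊ : ℕ) : ℝ)
      ≤ 8 * 2 ^ L * ∑ i ∈ range (L + 1), (c / 2) ^ (L - i) := by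
        rw [mul_sum]; exact sum_le_sum hterm
    _ ≤ 8 * 2 ^ L * (1 - c / 2)⁻¹ := by
        gcongr; exact sum_range_pow_sub_le (by positivity) (by linarith) L
    _ ≤ ((⌈8 * (1 - c / 2)⁻¹⌉₊ * 2 ^ L : ℕ) : ℝ) := by
        push_cast; rw [mul_right_comm]; gcongr; exact Nat.le_ceil _

lemma sum_div_sqrt_ceil_le {ρ γ R : ℝ} (hρ : 0 < ρ) (hγ : 0 < γ) (hργ : 1 < ρ * γ) (hR : 0 ≤ R)
    {r : ℕ → ℝ} (hr : ∀ i, r i ≤ R * ρ ^ i) (L : ℕ) :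
    ∑ i ∈ range (L + 1), r i / √⌈(γ ^ 2) ^ (L - i)⌉₊ ≤ R * ρ ^ L * (1 - (ρ * γ)⁻¹)⁻¹ := by
  have hterm : ∀ i ∈ range (L + 1),
      r i / √⌈(γ ^ 2) ^ (L - i)⌉₊ ≤ R * ρ ^ L * (ρ * γ)⁻¹ ^ (L - i) := by
    intro i hi
    have hiL : i + (L - i) = L := by have := mem_range.1 hi; omega
    have hk : γ ^ (L - i) ≤ √⌈(γ ^ 2) ^ (L - i)⌉₊ := by
      rw [← Real.sqrt_sq (pow_nonneg hγ.le _), ← pow_mul, mul_comm, pow_mul]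
      exact Real.sqrt_le_sqrt (Nat.le_ceil _)
    calc r i / √⌈(γ ^ 2) ^ (L - i)⌉₊ ≤ R * ρ ^ i / γ ^ (L - i) :=
          div_le_div₀ (by positivity) (hr i) (pow_pos hγ _) hk
      _ = R * ρ ^ L * (ρ * γ)⁻¹ ^ (L - i) := by
          rw [← hiL, pow_add, inv_pow, mul_pow, Nat.add_sub_cancel_left]; field_simp
  calc _ ≤ ∑ i ∈ range (L + 1), R * ρ ^ L * (ρ * γ)⁻¹ ^ (L - i) := sum_le_sum hterm
    _ ≤ R * ρ ^ L * (1 - (ρ * γ)⁻¹)⁻¹ := by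
        rw [← mul_sum]
        gcongr
        exact sum_range_pow_sub_le (by positivity) (inv_lt_one_of_one_lt₀ hργ) L

lemma two_pow_rpow_comm (x : ℝ) (i : ℕ) : ((2 : ℝ) ^ i) ^ x = ((2 : ℝ) ^ x) ^ i := by
  rw [← Real.rpow_natCast 2 i, ← Real.rpow_mul zero_le_two, mul_comm,
    Real.rpow_mul_natCast zero_le_two]

lemma two_rpow_half_sq (x : ℝ) : ((2 : ℝ) ^ (x / 2)) ^ 2 = 2 ^ x := by
  rw [← Real.rpow_natCast, ← Real.rpow_mul zero_le_two]; norm_num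

lemma div_sub_one_le_mul {β x : ℝ} (hβ : 1 < β) (hx : 0 ≤ x) : x / (β - 1) ≤ β / (β - 1) * x := by
  rw [div_mul_eq_mul_div]
  have : 0 < β - 1 := by linarith
  gcongr
  exact le_mul_of_one_le_left hx hβ.le

end Arithmetic

variable {β : ℝ}

noncomputable def tailWgt (β : ℝ) (M : ℕ) : ℝ := ∑' n : ℕ, ((n + M + 1 : ℕ) : ℝ) ^ (-β)

lemma summable_tailWgt (hβ : 1 < β) (M : ℕ) :
    Summable fun n : ℕ => ((n + M + 1 : ℕ) : ℝ) ^ (-β) :=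
  (summable_nat_add_iff (M + 1)).2 (Real.summable_nat_rpow.2 (by linarith))

lemma tailWgt_nonneg (β : ℝ) (M : ℕ) : 0 ≤ tailWgt β M :=
  tsum_nonneg fun _ => by positivity

lemma tailWgt_le (hβ : 1 < β) {M : ℕ} (hM : 0 < M) :
    tailWgt β M ≤ (M : ℝ) ^ (1 - β) / (β - 1) := by
  have hM' : (0 : ℝ) < M := by exact_mod_cast hM
  calc tailWgt β M ≤ ∫ x in Set.Ioi (M : ℝ), x ^ (-β) :=
        AntitoneOn.tsum_comp_add_le_integral M
          ((Real.antitoneOn_rpow_Ioi_of_exponent_nonpos (by linarith)).mono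
            fun x hx => hM'.trans_le hx)
          (integrableOn_Ioi_rpow_of_lt (by linarith) hM')
          fun x hx => Real.rpow_nonneg (hM'.trans hx).le _
    _ = (M : ℝ) ^ (1 - β) / (β - 1) := by
        rw [integral_Ioi_rpow_of_lt (by linarith) hM', neg_div, ← div_neg, neg_add, neg_neg,
          neg_add_eq_sub, ← sub_eq_add_neg]

lemma tailWgt_zero_le (hβ : 1 < β) : tailWgt β 0 ≤ β / (β - 1) := by
  have h1 : tailWgt β 1 ≤ 1 / (β - 1) := by simpa using tailWgt_le hβ one_pos
  have h2 : β / (β - 1) = 1 + 1 / (β - 1) := by field_simp [(by linarith : β - 1 ≠ 0)]; ring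
  rw [tailWgt, (summable_tailWgt hβ 0).tsum_eq_zero_add, h2]
  exact add_le_add (by simp) h1

lemma sqrt_tailWgt_half_two_pow_le (hβ : 1 < β) (i : ℕ) :
    √(tailWgt β (2 ^ i / 2)) ≤ √(2 ^ (β - 1) * (β / (β - 1))) * ((2 : ℝ) ^ ((1 - β) / 2)) ^ i := by
  rw [← Real.sqrt_sq (by positivity : 0 ≤ ((2 : ℝ) ^ ((1 - β) / 2)) ^ i),
    ← Real.sqrt_mul (by positivity), ← pow_mul, mul_comm i, pow_mul, two_rpow_half_sq]
  refine Real.sqrt_le_sqrt ?_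
  have hβ' : 0 < β - 1 := by linarith
  cases i with
  | zero =>
    simpa using (tailWgt_zero_le hβ).trans
      (le_mul_of_one_le_left (by positivity) (Real.one_le_rpow one_le_two hβ'.le))
  | succ i =>
    rw [pow_succ, Nat.mul_div_cancel _ two_pos]
    have h := tailWgt_le hβ (M := 2 ^ i) (by positivity)
    push_cast at h
    rw [two_pow_rpow_comm] at h
    have hinv : (2 : ℝ) ^ (β - 1) * 2 ^ (1 - β) = 1 := by
      rw [← Real.rpow_add two_pos]; simp
    refine h.trans ((div_sub_one_le_mul hβ (by positivity)).trans_eq ?_)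
    linear_combination (-(β / (β - 1) * ((2 : ℝ) ^ (1 - β)) ^ i)) * hinv

lemma sum_rpow_le_tailWgt (hβ : 1 < β) {M : ℕ} {J : Finset ℕ} (hJ : ∀ j ∈ J, M ≤ j) :
    ∑ j ∈ J, (1 + (j : ℝ)) ^ (-β) ≤ tailWgt β M := by
  have hinj : Set.InjOn (· + M) ((· + M) ⁻¹' (J : Set ℕ)) := fun _ _ _ _ h => by simpa using h
  calc ∑ j ∈ J, (1 + (j : ℝ)) ^ (-β)
      = ∑ n ∈ J.preimage (· + M) hinj, (1 + ((n + M : ℕ) : ℝ)) ^ (-β) :=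
        (sum_preimage _ J hinj _ fun j hj hj' => absurd ⟨j - M, by simp [hJ j hj]⟩ hj').symm
    _ = ∑ n ∈ J.preimage (· + M) hinj, ((n + M + 1 : ℕ) : ℝ) ^ (-β) :=
        sum_congr rfl fun n _ => by push_cast; ring_nf
    _ ≤ tailWgt β M := (summable_tailWgt hβ M).sum_le_tsum _ fun _ _ => by positivity

lemma wgt_pos (β : ℝ) (t : Node) : 0 < wgt β t := by unfold wgt; positivity

lemma prefix_length_injOn (u : Node) : Set.InjOn List.length {t : Node | t <+: u} :=
  fun _ h₁ _ h₂ h => by rw [List.prefix_iff_eq_take.1 h₁, List.prefix_iff_eq_take.1 h₂, h]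

lemma sum_wgt_prefixes_le (hβ : 1 < β) {G : Finset Node} {u : Node} {M : ℕ}
    (hG : ∀ t ∈ G, t <+: u ∧ M ≤ t.length) : ∑ t ∈ G, wgt β t ≤ tailWgt β M := by
  unfold wgt
  rw [← sum_image (f := fun j : ℕ => (1 + (j : ℝ)) ^ (-β))
    fun t ht t' ht' => prefix_length_injOn u (hG t ht).1 (hG t' ht').1]
  exact sum_rpow_le_tailWgt hβ fun j hj => by
    obtain ⟨t, ht, rfl⟩ := mem_image.1 hj
    exact (hG t ht).2

def nodesBelow (n : ℕ) : Finset Node :=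
  (range n).biUnion fun k =>
    (univ : Finset (List.Vector Bool k)).map ⟨List.Vector.toList, List.Vector.toList_injective⟩

@[simp] lemma mem_nodesBelow {n : ℕ} {t : Node} : t ∈ nodesBelow n ↔ t.length < n := by
  simp only [nodesBelow, mem_biUnion, mem_range, mem_map, mem_univ, true_and,
    Function.Embedding.coeFn_mk]
  exact ⟨fun ⟨k, hk, v, hv⟩ => hv ▸ v.toList_length.symm ▸ hk,
    fun h => ⟨t.length, h, ⟨t, rfl⟩, rfl⟩⟩

lemma card_nodesBelow_le (n : ℕ) : #(nodesBelow n) ≤ 2 ^ n := by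
  refine card_biUnion_le.trans ?_
  simp only [card_map, card_univ, card_vector, Fintype.card_bool]
  induction n with
  | zero => simp
  | succ n ih => rw [sum_range_succ, pow_succ]; omega

-- The column of `V*` indexed by `u`.
def ancestors (u : Node) (t : Node) : ℝ := if t <+: u then 1 else 0

lemma Vstar_apply_eq_tsum (μ : Node → ℝ) (t : Node) : Vstar μ t = ∑' u, μ u * ancestors u t := by
  change ∑' u : {u | t <+: u}, μ u = _
  rw [tsum_subtype {u | t <+: u} μ]
  refine tsum_congr fun u => ?_
  by_cases h : t <+: u <;> simp [ancestors, h]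

lemma summable_mul_ancestors {μ : Node → ℝ} (hμ : MemL1 μ) (t : Node) :
    Summable fun u => μ u * ancestors u t :=
  Summable.of_norm_bounded hμ fun u => by
    rw [Real.norm_eq_abs, abs_mul]
    refine mul_le_of_le_one_right (abs_nonneg _) ?_
    unfold ancestors; split_ifs <;> simp

/-- The coordinates `√w(t) f(t)`, `t ∈ F`, of the part of `f` on the levels in `s`: an isometric
copy of that part of `ℓ₂(T,W)` (see `norm_sq_weightedRestrict`). -/
noncomputable def weightedRestrict (β : ℝ) (F : Finset Node) (s : Set ℕ) (f : Node → ℝ) :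
    EuclideanSpace ℝ F :=
  WithLp.toLp 2 fun t => (List.length ⁻¹' s).indicator (fun t => √(wgt β t)) t.1 * f t.1

section weightedRestrict

variable {F : Finset Node} {s : Set ℕ}

lemma weightedRestrict_apply (f : Node → ℝ) (t : F) :
    weightedRestrict β F s f t =
      (List.length ⁻¹' s).indicator (fun t => √(wgt β t)) t.1 * f t.1 :=
  rfl

lemma norm_sq_weightedRestrict (f : Node → ℝ) :
    ‖weightedRestrict β F s f‖ ^ 2 =
      ∑ t ∈ F, (List.length ⁻¹' s).indicator (wgt β) t * f t ^ 2 := by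
  rw [EuclideanSpace.norm_sq_eq, ← sum_coe_sort F]
  refine sum_congr rfl fun t _ => ?_
  rw [Real.norm_eq_abs, sq_abs, weightedRestrict_apply, mul_pow]
  by_cases ht : t.1 ∈ List.length ⁻¹' s
  · simp [ht, Real.sq_sqrt (wgt_pos β _).le]
  · simp [ht]

lemma weightedRestrict_union {s' : Set ℕ} (h : Disjoint s s') (f : Node → ℝ) :
    weightedRestrict β F (s ∪ s') f = weightedRestrict β F s f + weightedRestrict β F s' f := by
  ext t
  simp [weightedRestrict_apply, Set.preimage_union,
    Set.indicator_union_of_disjoint (h.preimage List.length), add_mul]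

lemma tsum_smul_weightedRestrict_ancestors {μ : Node → ℝ} (hμ : MemL1 μ) :
    ∑' u, μ u • weightedRestrict β F s (ancestors u) = weightedRestrict β F s (Vstar μ) := by
  set e := EuclideanSpace.equiv F ℝ
  have hcoord : ∀ t : F, Summable fun u => e (μ u • weightedRestrict β F s (ancestors u)) t :=
    fun t => ((summable_mul_ancestors hμ t).mul_left
      ((List.length ⁻¹' s).indicator (fun t => √(wgt β t)) t.1)).congr fun u => by
        simp only [PiLp.continuousLinearEquiv_apply, PiLp.smul_apply, weightedRestrict_apply,
          smul_eq_mul, e]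
        ring
  apply e.injective
  rw [e.map_tsum]
  funext t
  rw [tsum_apply (Pi.summable.2 hcoord)]
  simp only [PiLp.continuousLinearEquiv_apply, PiLp.smul_apply, weightedRestrict_apply,
    smul_eq_mul, Vstar_apply_eq_tsum, ← tsum_mul_left, e]
  exact tsum_congr fun u => by ring

lemma norm_sq_weightedRestrict_ancestors_le (hβ : 1 < β) {M : ℕ} (hs : s ⊆ Set.Ici M)
    (u : Node) : ‖weightedRestrict β F s (ancestors u)‖ ^ 2 ≤ tailWgt β M := by
  rw [norm_sq_weightedRestrict]
  refine le_trans ?_ (sum_wgt_prefixes_le hβ (G := F.filter fun t => t <+: u ∧ M ≤ t.length)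
    fun t ht => (mem_filter.1 ht).2)
  rw [sum_filter]
  refine sum_le_sum fun t _ => ?_
  by_cases ht : t.length ∈ s
  · have hM : M ≤ t.length := hs ht
    by_cases hu : t <+: u <;> simp [ht, hu, hM, ancestors]
  · simp only [Set.indicator_of_notMem (show t ∉ List.length ⁻¹' s from ht), zero_mul]
    split_ifs <;> simp [(wgt_pos β t).le]

-- The triangle inequality over `V*μ = ∑' u, μ u • ancestors u`.
lemma norm_weightedRestrict_Vstar_le (hβ : 1 < β) {μ : Node → ℝ} (hμ : MemL1 μ)
    (hμ1 : l1Norm μ ≤ 1) {M : ℕ} (hs : s ⊆ Set.Ici M) :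
    ‖weightedRestrict β F s (Vstar μ)‖ ≤ √(tailWgt β M) := by
  have hbound : ∀ u, ‖μ u • weightedRestrict β F s (ancestors u)‖ ≤ |μ u| * √(tailWgt β M) :=
    fun u => by
      rw [norm_smul, Real.norm_eq_abs]
      exact mul_le_mul_of_nonneg_left
        (Real.le_sqrt_of_sq_le (norm_sq_weightedRestrict_ancestors_le hβ hs u)) (abs_nonneg _)
  rw [← tsum_smul_weightedRestrict_ancestors hμ]
  calc ‖∑' u, μ u • weightedRestrict β F s (ancestors u)‖
      ≤ ∑' u, |μ u| * √(tailWgt β M) := tsum_of_norm_bounded (hμ.mul_right _).hasSum hbound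
    _ = l1Norm μ * √(tailWgt β M) := tsum_mul_right
    _ ≤ √(tailWgt β M) := mul_le_of_le_one_left (Real.sqrt_nonneg _) hμ1

lemma weightedRestrict_ancestors_take {n : ℕ} (hs : s ⊆ Set.Iic n) (u : Node) :
    weightedRestrict β F s (ancestors (u.take n)) = weightedRestrict β F s (ancestors u) := by
  ext t
  by_cases ht : t.1.length ∈ s
  · have hn : t.1.length ≤ n := hs ht
    simp [weightedRestrict_apply, ancestors, List.prefix_take_iff, hn]
  · simp [weightedRestrict_apply, Set.indicator_of_notMem (show t.1 ∉ List.length ⁻¹' s from ht)]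

end weightedRestrict

noncomputable def unweight (β : ℝ) (m : ℕ) (g : EuclideanSpace ℝ (nodesBelow m)) : Node → ℝ :=
  fun t => if h : t ∈ nodesBelow m then g ⟨t, h⟩ / √(wgt β t) else 0

lemma norm_sq_weightedRestrict_sub (m : ℕ) (f : Node → ℝ) (g : EuclideanSpace ℝ (nodesBelow m)) :
    ‖weightedRestrict β (nodesBelow m) (Set.Iio m) f - g‖ ^ 2 =
      ∑ t ∈ nodesBelow m, wgt β t * (f t - unweight β m g t) ^ 2 := by
  rw [EuclideanSpace.norm_sq_eq, ← sum_coe_sort (nodesBelow m)]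
  refine sum_congr rfl fun t _ => ?_
  have hw : √(wgt β t) ≠ 0 := (Real.sqrt_pos.2 (wgt_pos β t)).ne'
  rw [Real.norm_eq_abs, sq_abs, PiLp.sub_apply, weightedRestrict_apply,
    Set.indicator_of_mem (show t.1 ∈ List.length ⁻¹' Set.Iio m from mem_nodesBelow.1 t.2),
    unweight, dif_pos t.2,
    show √(wgt β t) * f t - g t = √(wgt β t) * (f t - g t / √(wgt β t)) by field_simp,
    mul_pow, Real.sq_sqrt (wgt_pos β t).le]

lemma distSqW_Vstar_unweight_le (hβ : 1 < β) {μ : Node → ℝ} (hμ : MemL1 μ) (hμ1 : l1Norm μ ≤ 1)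
    (m : ℕ) (g : EuclideanSpace ℝ (nodesBelow m)) :
    distSqW β (Vstar μ) (unweight β m g) ≤ ENNReal.ofReal
      (‖weightedRestrict β (nodesBelow m) (Set.Iio m) (Vstar μ) - g‖ ^ 2 + tailWgt β m) := by
  refine ENNReal.summable.tsum_le_of_sum_le fun G => ?_
  rw [← ENNReal.ofReal_sum_of_nonneg fun t _ => mul_nonneg (wgt_pos β t).le (sq_nonneg _)]
  refine ENNReal.ofReal_le_ofReal ?_
  rw [← sum_filter_add_sum_filter_not G (· ∈ nodesBelow m)]
  gcongr ?_ + ?_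
  · rw [norm_sq_weightedRestrict_sub]
    exact sum_le_sum_of_subset_of_nonneg (fun t ht => (mem_filter.1 ht).2)
      fun t _ _ => mul_nonneg (wgt_pos β t).le (sq_nonneg _)
  · set G' := G.filter (· ∉ nodesBelow m)
    have hG' : ∀ t ∈ G', m ≤ t.length := fun t ht => by simpa using (mem_filter.1 ht).2
    have h := norm_weightedRestrict_Vstar_le (F := G') hβ hμ hμ1 (subset_refl (Set.Ici m))
    rw [← Real.sqrt_sq (norm_nonneg _), Real.sqrt_le_sqrt_iff (tailWgt_nonneg β m),
      norm_sq_weightedRestrict] at h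
    refine le_of_eq_of_le (sum_congr rfl fun t ht => ?_) h
    rw [Set.indicator_of_mem (show t ∈ List.length ⁻¹' Set.Ici m from hG' t ht), unweight,
      dif_neg (mem_filter.1 ht).2, sub_zero]

-- `2 ^ 0 / 2 = 0`, so block `0` is the root level.
def dyadicBlock (i : ℕ) : Set ℕ := Set.Ico (2 ^ i / 2) (2 ^ i)

lemma sum_weightedRestrict_dyadicBlock {F : Finset Node} (n : ℕ) (f : Node → ℝ) :
    ∑ i ∈ range (n + 1), weightedRestrict β F (dyadicBlock i) f =
      weightedRestrict β F (Set.Iio (2 ^ n)) f := by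
  induction n with
  | zero => simp [dyadicBlock, Set.Ico, Set.Iio]
  | succ n ih =>
    have hdisj : Disjoint (Set.Iio (2 ^ n)) (dyadicBlock (n + 1)) :=
      Set.disjoint_left.2 fun k hk hk' => by simp [dyadicBlock, pow_succ] at hk hk'; omega
    rw [sum_range_succ, ih, ← weightedRestrict_union hdisj]
    congr 1
    ext k
    simp [dyadicBlock, pow_succ]
    omega

noncomputable def blockColumns (β : ℝ) (F : Finset Node) (i : ℕ) :
    Finset (EuclideanSpace ℝ F) :=
  (nodesBelow (2 ^ i + 1)).image fun v => weightedRestrict β F (dyadicBlock i) (ancestors v)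

section blockColumns

variable {F : Finset Node}

lemma card_insert_zero_union_neg_blockColumns_le (i : ℕ) :
    #(insert 0 (blockColumns β F i ∪ -blockColumns β F i)) ≤ 2 ^ 2 ^ (i + 2) := by
  have h1 := card_insert_zero_union_neg_le (blockColumns β F i)
  have h2 : #(blockColumns β F i) ≤ 2 ^ (2 ^ i + 1) := card_image_le.trans (card_nodesBelow_le _)
  have h3 : 2 ^ (2 ^ i + 3) ≤ 2 ^ 2 ^ (i + 2) := Nat.pow_le_pow_right two_pos <| by
    rw [pow_add]; have := Nat.one_le_two_pow (n := i); omega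
  have h4 := Nat.one_le_two_pow (n := 2 ^ i)
  rw [pow_succ] at h2
  rw [pow_add] at h3
  omega

lemma norm_le_of_mem_blockColumns (hβ : 1 < β) {i : ℕ} {a : EuclideanSpace ℝ F}
    (ha : a ∈ blockColumns β F i) : ‖a‖ ≤ √(tailWgt β (2 ^ i / 2)) := by
  obtain ⟨v, -, rfl⟩ := mem_image.1 ha
  exact Real.le_sqrt_of_sq_le (norm_sq_weightedRestrict_ancestors_le hβ (fun j hj => hj.1) v)

lemma weightedRestrict_dyadicBlock_Vstar_mem {μ : Node → ℝ} (hμ : MemL1 μ) (hμ1 : l1Norm μ ≤ 1)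
    (i : ℕ) :
    weightedRestrict β F (dyadicBlock i) (Vstar μ) ∈
      convexHull ℝ (↑(insert 0 (blockColumns β F i ∪ -blockColumns β F i)) : Set _) := by
  rw [← tsum_smul_weightedRestrict_ancestors hμ]
  exact tsum_smul_mem_convexHull _ hμ hμ1 fun u => mem_image.2
    ⟨u.take (2 ^ i), mem_nodesBelow.2 (by simp),
      weightedRestrict_ancestors_take (fun j hj => hj.2.le) u⟩

end blockColumns

-- `δ` is the square of the radius.
def IsSqNet (β : ℝ) (N : Finset (Node → ℝ)) (δ : ℝ) : Prop :=
  ∀ μ : Node → ℝ, MemL1 μ → l1Norm μ ≤ 1 → ∃ g ∈ N, distSqW β (Vstar μ) g ≤ ENNReal.ofReal δ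

lemma IsSqNet.mono {N : Finset (Node → ℝ)} {δ δ' : ℝ} (h : IsSqNet β N δ) (hδ : δ ≤ δ') :
    IsSqNet β N δ' := fun μ hμ hμ1 => by
  obtain ⟨g, hg, hd⟩ := h μ hμ hμ1
  exact ⟨g, hg, hd.trans (ENNReal.ofReal_le_ofReal hδ)⟩

lemma isSqNet_zero (hβ : 1 < β) : IsSqNet β {0} (tailWgt β 0) := fun μ hμ hμ1 => by
  refine ⟨0, mem_singleton_self _, ?_⟩
  have h := distSqW_Vstar_unweight_le hβ hμ hμ1 0 0
  have h0 : unweight β 0 0 = 0 := funext fun t => dif_neg (by simp)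
  have hnorm : ‖weightedRestrict β (nodesBelow 0) (Set.Iio 0) (Vstar μ) - 0‖ ^ 2 = 0 := by
    rw [EuclideanSpace.norm_sq_eq]
    exact sum_eq_zero fun t _ => absurd (mem_nodesBelow.1 t.2) (Nat.not_lt_zero _)
  rwa [h0, hnorm, zero_add] at h

theorem exists_isSqNet_of_blocks (hβ : 1 < β) (L : ℕ) (k : ℕ → ℕ) (hk : ∀ i, 0 < k i) :
    ∃ N : Finset (Node → ℝ), #N ≤ 2 ^ ∑ i ∈ range (L + 1), 2 ^ (i + 2) * k i ∧
      IsSqNet β N ((∑ i ∈ range (L + 1), √(tailWgt β (2 ^ i / 2)) / √(k i)) ^ 2 +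
        tailWgt β (2 ^ L)) := by
  classical
  set H := nodesBelow (2 ^ L)
  set S : ℕ → Finset (EuclideanSpace ℝ H) := fun i =>
    insert 0 (blockColumns β H i ∪ -blockColumns β H i)
  set grid := (Fintype.piFinset fun i : Fin (L + 1) => averages (S i) (k i)).image
    fun g => ∑ i, g i
  refine ⟨grid.image (unweight β (2 ^ L)), ?_, fun μ hμ hμ1 => ?_⟩
  · calc #(grid.image (unweight β (2 ^ L)))
        ≤ #(Fintype.piFinset fun i : Fin (L + 1) => averages (S i) (k i)) :=
          card_image_le.trans card_image_le
      _ = ∏ i : Fin (L + 1), #(averages (S i) (k i)) := Fintype.card_piFinset _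
      _ ≤ ∏ i : Fin (L + 1), 2 ^ (2 ^ ((i : ℕ) + 2) * k i) := prod_le_prod' fun i _ =>
          (card_averages_le _ _).trans <| by
            rw [pow_mul]
            exact Nat.pow_le_pow_left (card_insert_zero_union_neg_blockColumns_le _) _
      _ = 2 ^ ∑ i ∈ range (L + 1), 2 ^ (i + 2) * k i := by
          rw [prod_pow_eq_pow_sum, Fin.sum_univ_eq_sum_range (fun i => 2 ^ (i + 2) * k i)]
  · choose g hg hgx using fun i : Fin (L + 1) =>
      exists_mem_averages_norm_sub_le (weightedRestrict_dyadicBlock_Vstar_mem hμ hμ1 i)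
        (norm_le_of_mem_insert_zero_union_neg (Real.sqrt_nonneg _)
          fun a ha => norm_le_of_mem_blockColumns hβ ha) (hk i)
    refine ⟨unweight β (2 ^ L) (∑ i, g i),
      mem_image_of_mem _ (mem_image_of_mem _ (Fintype.mem_piFinset.2 hg)),
      (distSqW_Vstar_unweight_le hβ hμ hμ1 _ _).trans (ENNReal.ofReal_le_ofReal ?_)⟩
    rw [← sum_weightedRestrict_dyadicBlock, ← Fin.sum_univ_eq_sum_range
      (fun i => weightedRestrict β H (dyadicBlock i) (Vstar μ)), ← sum_sub_distrib]
    gcongr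
    calc ‖∑ i : Fin (L + 1), (weightedRestrict β H (dyadicBlock i) (Vstar μ) - g i)‖
        ≤ ∑ i : Fin (L + 1), √(tailWgt β (2 ^ (i : ℕ) / 2)) / √(k i) :=
          (norm_sum_le _ _).trans (sum_le_sum fun i _ => hgx i)
      _ = _ := Fin.sum_univ_eq_sum_range (fun i => √(tailWgt β (2 ^ i / 2)) / √(k i)) (L + 1)

theorem exists_isSqNet_dyadic (hβ1 : 1 < β) (hβ2 : β < 2) :
    ∃ D : ℕ, ∃ K : ℝ, 0 < D ∧ 0 < K ∧ IsSqNet β {0} K ∧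
      ∀ L : ℕ, ∃ N : Finset (Node → ℝ), #N ≤ 2 ^ (D * 2 ^ L) ∧
        IsSqNet β N (K * ((2 : ℝ) ^ L) ^ (1 - β)) := by
  -- Block `i` has radius `≲ ρ^i`; `k_i = ⌈γ^{2(L-i)}⌉` terms cost `≈ 2^i k_i` bits and err by
  -- `≲ ρ^i / γ^{L-i}`. As `γ² < 2` and `ργ > 1`, both sums are geometric in `L - i`.
  set γ : ℝ := 2 ^ ((β / 2) / 2)
  set ρ : ℝ := 2 ^ ((1 - β) / 2)
  set R : ℝ := √(2 ^ (β - 1) * (β / (β - 1)))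
  set E : ℝ := (1 - (ρ * γ)⁻¹)⁻¹
  have hργ : 1 < ρ * γ := by
    rw [← Real.rpow_add two_pos]; exact Real.one_lt_rpow one_lt_two (by linarith)
  have hc1 : 1 ≤ γ ^ 2 := two_rpow_half_sq (β / 2) ▸ Real.one_le_rpow one_le_two (by linarith)
  have hc2 : γ ^ 2 < 2 :=
    two_rpow_half_sq (β / 2) ▸ Real.rpow_lt_self_of_one_lt one_lt_two (by linarith)
  have hc2' : 0 < 1 - γ ^ 2 / 2 := by linarith
  have hβ' : 0 < β - 1 := by linarith
  refine ⟨⌈8 * (1 - γ ^ 2 / 2)⁻¹⌉₊, (R * E) ^ 2 + β / (β - 1), Nat.ceil_pos.2 (by positivity),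
    by positivity,
    (isSqNet_zero hβ1).mono ((tailWgt_zero_le hβ1).trans (le_add_of_nonneg_left (sq_nonneg _))),
    fun L => ?_⟩
  obtain ⟨N, hN, hnet⟩ := exists_isSqNet_of_blocks hβ1 L (fun i => ⌈(γ ^ 2) ^ (L - i)⌉₊)
    fun i => Nat.ceil_pos.2 (by positivity)
  refine ⟨N, hN.trans (Nat.pow_le_pow_right two_pos (sum_two_pow_mul_ceil_le hc1 hc2 L)),
    hnet.mono ?_⟩
  have hX : ((2 : ℝ) ^ L) ^ (1 - β) = (ρ ^ L) ^ 2 := by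
    rw [two_pow_rpow_comm, ← two_rpow_half_sq, ← pow_mul, ← pow_mul, mul_comm]
  have hhead : (∑ i ∈ range (L + 1), √(tailWgt β (2 ^ i / 2)) / √⌈(γ ^ 2) ^ (L - i)⌉₊) ^ 2 ≤
      (R * E) ^ 2 * ((2 : ℝ) ^ L) ^ (1 - β) := by
    rw [hX, ← mul_pow, mul_right_comm]
    exact pow_le_pow_left₀ (sum_nonneg fun i _ => by positivity)
      (sum_div_sqrt_ceil_le (by positivity) (by positivity) hργ (by positivity)
        (sqrt_tailWgt_half_two_pow_le hβ1) L) 2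
  have htail := tailWgt_le hβ1 (M := 2 ^ L) (by positivity)
  push_cast at htail
  rw [add_mul]
  exact add_le_add hhead (htail.trans (div_sub_one_le_mul hβ1 (by positivity)))

lemma exists_isSqNet_card_le_two_pow (hβ : 1 < β) {D : ℕ} (hD : 0 < D) {K : ℝ} (hK : 0 ≤ K)
    (h0 : IsSqNet β {0} K)
    (hdyadic : ∀ L : ℕ, ∃ N : Finset (Node → ℝ), #N ≤ 2 ^ (D * 2 ^ L) ∧
      IsSqNet β N (K * ((2 : ℝ) ^ L) ^ (1 - β)))
    {n : ℕ} (hn : 0 < n) :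
    ∃ N : Finset (Node → ℝ), #N ≤ 2 ^ (n - 1) ∧
      IsSqNet β N (K * (2 * D) ^ (β - 1) * (n : ℝ) ^ (1 - β)) := by
  have hscale : ∀ x : ℝ, 0 < x → (n : ℝ) ≤ 2 * D * x →
      K * x ^ (1 - β) ≤ K * (2 * D) ^ (β - 1) * (n : ℝ) ^ (1 - β) := fun x hx hnx => by
    have hD' : (0 : ℝ) < 2 * D := by positivity
    have hn' : (0 : ℝ) < n := by exact_mod_cast hn
    rw [mul_assoc]
    refine mul_le_mul_of_nonneg_left ?_ hK
    calc x ^ (1 - β) ≤ ((n : ℝ) / (2 * D)) ^ (1 - β) :=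
          Real.rpow_le_rpow_of_nonpos (by positivity) (by rwa [div_le_iff₀' hD']) (by linarith)
      _ = (2 * D) ^ (β - 1) * (n : ℝ) ^ (1 - β) := by
          rw [Real.div_rpow hn'.le hD'.le, div_eq_mul_inv, ← Real.rpow_neg hD'.le, neg_sub,
            mul_comm]
  by_cases hsmall : n - 1 < D
  · refine ⟨{0}, by simp [Nat.one_le_two_pow], h0.mono ?_⟩
    simpa using hscale 1 one_pos (by norm_cast; omega)
  · -- the largest `L` with `D * 2^L ≤ n - 1`
    set P := (n - 1) / D
    have hP : P ≠ 0 := (Nat.div_pos (by omega) hD).ne'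
    set L := Nat.log 2 P
    have hLP : 2 ^ L ≤ P := Nat.pow_log_le_self 2 hP
    have hPL : P < 2 ^ (L + 1) := Nat.lt_pow_succ_log_self one_lt_two P
    obtain ⟨N, hN, hnet⟩ := hdyadic L
    refine ⟨N, hN.trans (Nat.pow_le_pow_right two_pos ?_),
      hnet.mono (hscale _ (by positivity) ?_)⟩
    · exact (Nat.mul_le_mul_left D hLP).trans (Nat.mul_div_le (n - 1) D)
    · have : n - 1 < D * (P + 1) := Nat.lt_mul_div_succ (n - 1) hD
      have : D * (P + 1) ≤ D * (2 ^ L * 2) := Nat.mul_le_mul_left D (pow_succ 2 L ▸ hPL)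
      have : n ≤ 2 * D * 2 ^ L := by rw [show 2 * D * 2 ^ L = D * (2 ^ L * 2) by ring]; omega
      exact_mod_cast this

end Entropy

open Entropy

/-- Upper bound `e_n(V*) ≤ C₂ n^{-(β-1)/2}` for `1 < β < 2`: for every radius
`ε` exceeding the bound, the image of the unit ball of `ℓ₁(T)` under `V*` can be
covered by `2^{n-1}` balls of radius `ε` in `ℓ₂(T,W)`. -/
theorem entropy_upper_bound_regular_small_beta (β : ℝ) (hβ1 : 1 < β) (hβ2 : β < 2) :
    ∃ C : ℝ, 0 < C ∧ ∀ n : ℕ, 0 < n → ∀ ε : ℝ, C * (n : ℝ) ^ (-((β - 1) / 2)) < ε →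
      ∃ N : Finset (Node → ℝ), N.card ≤ 2 ^ (n - 1) ∧
        ∀ μ : Node → ℝ, MemL1 μ → l1Norm μ ≤ 1 →
          ∃ g ∈ N, distSqW β (Vstar μ) g ≤ ENNReal.ofReal (ε ^ 2) := by
  obtain ⟨D, K, hD, hK, h0, hdyadic⟩ := exists_isSqNet_dyadic hβ1 hβ2
  refine ⟨√(K * (2 * D) ^ (β - 1)), by positivity, fun n hn ε hε => ?_⟩
  obtain ⟨N, hN, hnet⟩ := exists_isSqNet_card_le_two_pow hβ1 hD hK.le h0 hdyadic hn
  refine ⟨N, hN, hnet.mono ?_⟩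
  have hsq : K * (2 * D) ^ (β - 1) * (n : ℝ) ^ (1 - β) =
      (√(K * (2 * D) ^ (β - 1)) * (n : ℝ) ^ (-((β - 1) / 2))) ^ 2 := by
    rw [mul_pow, Real.sq_sqrt (by positivity), ← Real.rpow_natCast, ← Real.rpow_mul (by positivity)]
    norm_num
  rw [hsq]
  exact pow_le_pow_left₀ (by positivity) hε.le 2
end

section
/- Let T be the infinite binary tree with weight w(t) = (1+|t|)^{-β} where β > 1, and let V* : ℓ₁(T) → ℓ₂(T,W) be the operator (V*μ)(t) = Σ_{u ⪰ t} μ(u). Then there exists a constant C₁ = C₁(β) > 0 such that for all positive integers n, e_{n+1}(V*) ≥ (C₁/2) · n^{-(β-1)/2}. (This lower bound is proved by exhibiting 2ⁿ elements μ_j = δ_{s_j} − δ_{t_j}, with t_j the nodes of level n and s_j an offspring of t_j at level 2n, whose images under V* are pairwise orthogonal with ‖V*μ_j‖²_{2,W} = Σ_{l=n+1}^{2n} (1+l)^{-β} ≥ C₁² n^{-(β-1)}.) -/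
/-!
For a level-`n` node `t`, let `s = t ++ 0ⁿ` be its offspring at level `2n` and
`μ_t = (δ_s - δ_t) / 2`, an element of the unit ball of `ℓ₁(T)`. Then `V*μ_t` equals `1/2` on the
`n` nodes strictly below `t` on the path to `s`, while `0` and every other `V*μ_{t'}` vanish there.
These nodes have weight at least `(3n)^{-β}`, so the `2ⁿ + 1` points `0` and `V*μ_t` are pairwise at
squared distance at least `n (3n)^{-β} / 4`. A squared distance satisfies
`d(x, z) ≤ 2 d(x, y) + 2 d(y, z)`, so two of these points cannot both be within `n (3n)^{-β} / 16`
of the same center, and `2ⁿ` centers leave one of them that far from all centers.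
-/

open scoped ENNReal

lemma Vstar_single (s : Node) (a : ℝ) (t : Node) :
    Vstar (Pi.single s a) t = if t <+: s then a else 0 := by
  refine (tsum_subtype {u | t <+: u} (Pi.single s a)).trans ?_
  split_ifs with h
  · refine (congrArg tsum (funext fun u => ?_)).trans (tsum_pi_single s a)
    by_cases hu : u = s <;> simp [Set.indicator_apply, hu, h]
  · refine (congrArg tsum (funext fun u => ?_)).trans tsum_zero
    by_cases hu : u = s <;> simp [Set.indicator_apply, hu, h]

lemma Vstar_sub {μ ν : Node → ℝ} (hμ : Summable μ) (hν : Summable ν) :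
    Vstar (μ - ν) = Vstar μ - Vstar ν :=
  funext fun _ => (hμ.subtype _).tsum_sub (hν.subtype _)

lemma Vstar_zero : Vstar 0 = 0 := funext fun _ => by simp [Vstar]

lemma hasSum_abs_single (s : Node) (a : ℝ) :
    HasSum (fun u => |(Pi.single s a : Node → ℝ) u|) |a| := by
  simpa only [Pi.apply_single (fun _ => abs) (fun _ => abs_zero)] using hasSum_pi_single s |a|

lemma memL1_single_sub_single (s t : Node) (a : ℝ) : MemL1 (Pi.single s a - Pi.single t a) :=
  ((hasSum_pi_single s a).summable.sub (hasSum_pi_single t a).summable).abs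

lemma l1Norm_single_sub_single_le (s t : Node) (a : ℝ) :
    l1Norm (Pi.single s a - Pi.single t a) ≤ 2 * |a| := by
  set δs : Node → ℝ := Pi.single s a
  set δt : Node → ℝ := Pi.single t a
  have hsum := (hasSum_abs_single s a).add (hasSum_abs_single t a)
  calc l1Norm (δs - δt) ≤ ∑' u, (|δs u| + |δt u|) :=
        Summable.tsum_le_tsum (fun u => abs_sub (δs u) (δt u)) (memL1_single_sub_single s t a)
          hsum.summable
    _ = 2 * |a| := by rw [hsum.tsum_eq]; ring

lemma distSqW_comm (β : ℝ) (f g : Node → ℝ) : distSqW β f g = distSqW β g f := by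
  simp only [distSqW, sub_sq_comm (f _)]

lemma distSqW_le_two_mul_add (β : ℝ) (f g h : Node → ℝ) :
    distSqW β f h ≤ 2 * distSqW β f g + 2 * distSqW β g h := by
  simp only [distSqW, ← ENNReal.tsum_mul_left, ← ENNReal.tsum_add]
  refine ENNReal.tsum_le_tsum fun t => ?_
  have hw : 0 ≤ wgt β t := Real.rpow_nonneg (by positivity) _
  rw [← ENNReal.ofReal_ofNat 2, ← ENNReal.ofReal_mul zero_le_two, ← ENNReal.ofReal_mul zero_le_two,
    ← ENNReal.ofReal_add (by positivity) (by positivity)]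
  refine ENNReal.ofReal_le_ofReal ?_
  -- `(a + b)² ≤ 2a² + 2b²` for `a = f t - g t`, `b = g t - h t`
  nlinarith [mul_nonneg hw (sq_nonneg (f t - 2 * g t + h t))]

lemma rpow_neg_le_wgt {β L : ℝ} (hβ : 0 ≤ β) {t : Node} (ht : 1 + t.length ≤ L) :
    L ^ (-β) ≤ wgt β t :=
  Real.rpow_le_rpow_of_nonpos (by positivity) ht (neg_nonpos.mpr hβ)

lemma ofReal_card_mul_le_distSqW {β L c : ℝ} (hβ : 0 ≤ β) {f g : Node → ℝ} (P : Finset Node)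
    (hlen : ∀ u ∈ P, 1 + u.length ≤ L) (hgap : ∀ u ∈ P, c ^ 2 ≤ (f u - g u) ^ 2) :
    ENNReal.ofReal (P.card * (L ^ (-β) * c ^ 2)) ≤ distSqW β f g :=
  calc ENNReal.ofReal (P.card * (L ^ (-β) * c ^ 2))
      = ∑ _u ∈ P, ENNReal.ofReal (L ^ (-β) * c ^ 2) := by
        rw [Finset.sum_const, nsmul_eq_mul, ENNReal.ofReal_mul (Nat.cast_nonneg _),
          ENNReal.ofReal_natCast]
    _ ≤ ∑ u ∈ P, ENNReal.ofReal (wgt β u * (f u - g u) ^ 2) :=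
        Finset.sum_le_sum fun u hu => ENNReal.ofReal_le_ofReal <|
          mul_le_mul (rpow_neg_le_wgt hβ (hlen u hu)) (hgap u hu) (sq_nonneg c)
            (Real.rpow_nonneg (by positivity) _)
    _ ≤ distSqW β f g := ENNReal.sum_le_tsum P

theorem exists_forall_le_of_card_lt {ι α : Type*} [Fintype ι] (d : α → α → ℝ≥0∞)
    (hcomm : ∀ x y, d x y = d y x) (htri : ∀ x y z, d x z ≤ 2 * d x y + 2 * d y z)
    {x : ι → α} {r : ℝ≥0∞} (hsep : Pairwise fun i j => 4 * r ≤ d (x i) (x j))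
    {N : Finset α} (hN : N.card < Fintype.card ι) :
    ∃ i, ∀ g ∈ N, r ≤ d (x i) g := by
  by_contra! hnear
  choose g hgN hg using hnear
  obtain ⟨i, -, j, -, hij, hgij⟩ := Finset.exists_ne_map_eq_of_card_lt_of_maps_to
    (s := Finset.univ) (by simpa using hN) fun i _ => hgN i
  have hj : d (g i) (x j) < r := by rw [hcomm, hgij]; exact hg j
  have hlt : 4 * r < 4 * r := calc
    4 * r ≤ d (x i) (x j) := hsep hij
    _ ≤ 2 * d (x i) (g i) + 2 * d (g i) (x j) := htri _ _ _
    _ < 2 * r + 2 * r :=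
      ENNReal.add_lt_add (ENNReal.mul_lt_mul_right two_ne_zero ENNReal.ofNat_ne_top (hg i))
        (ENNReal.mul_lt_mul_right two_ne_zero ENNReal.ofNat_ne_top hj)
    _ = 4 * r := by ring
  exact hlt.false

def offspring (t : Node) : Node := t ++ List.replicate t.length false

def offspringPath (t : Node) : Finset Node :=
  (Finset.Ioc t.length (2 * t.length)).image fun l => (offspring t).take l

lemma length_offspring (t : Node) : (offspring t).length = 2 * t.length := by
  simp [offspring, two_mul]

lemma mem_offspringPath {t u : Node} :
    u ∈ offspringPath t ↔ u <+: offspring t ∧ t.length < u.length := by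
  simp only [offspringPath, Finset.mem_image, Finset.mem_Ioc]
  constructor
  · rintro ⟨l, ⟨hlt, hle⟩, rfl⟩
    exact ⟨List.take_prefix l _, by simp [length_offspring]; omega⟩
  · rintro ⟨hpre, hlt⟩
    exact ⟨u.length, ⟨hlt, length_offspring t ▸ hpre.length_le⟩,
      (List.prefix_iff_eq_take.mp hpre).symm⟩

lemma card_offspringPath (t : Node) : (offspringPath t).card = t.length := by
  rw [offspringPath, Finset.card_image_of_injOn, Nat.card_Ioc]
  · omega
  · intro l hl l' hl' h
    simp only [Finset.coe_Ioc, Set.mem_Ioc] at hl hl'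
    simpa [length_offspring, hl.2, hl'.2] using congrArg List.length h

noncomputable def dipole (t : Node) : Node → ℝ :=
  Pi.single (offspring t) (1 / 2) - Pi.single t (1 / 2)

lemma Vstar_dipole (t u : Node) :
    Vstar (dipole t) u =
      (if u <+: offspring t then 1 / 2 else 0) - (if u <+: t then 1 / 2 else 0) := by
  rw [dipole, Vstar_sub (hasSum_pi_single _ _).summable (hasSum_pi_single _ _).summable,
    Pi.sub_apply, Vstar_single, Vstar_single]

lemma Vstar_dipole_of_mem_offspringPath {t u : Node} (hu : u ∈ offspringPath t) :
    Vstar (dipole t) u = 1 / 2 := by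
  obtain ⟨hpre, hlt⟩ := mem_offspringPath.mp hu
  have hnot : ¬u <+: t := fun h => (h.length_le.trans_lt hlt).false
  simp [Vstar_dipole, hpre, hnot]

lemma Vstar_dipole_eq_zero_of_mem_offspringPath {t t' u : Node} (hlen : t'.length = t.length)
    (hne : t' ≠ t) (hu : u ∈ offspringPath t) : Vstar (dipole t') u = 0 := by
  obtain ⟨hpre, hlt⟩ := mem_offspringPath.mp hu
  have hnot : ¬u <+: t' := fun h => (h.length_le.trans_lt (hlen ▸ hlt)).false
  have hnot' : ¬u <+: offspring t' := by
    intro h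
    have ht'u : t' <+: u := List.prefix_of_prefix_length_le (List.prefix_append _ _) h (by omega)
    have htu : t <+: u := List.prefix_of_prefix_length_le (List.prefix_append _ _) hpre hlt.le
    exact hne ((List.prefix_of_prefix_length_le ht'u htu hlen.le).eq_of_length hlen)
  simp [Vstar_dipole, hnot, hnot']

noncomputable def testMeasure (n : ℕ) (i : Option (Fin n → Bool)) : Node → ℝ :=
  i.elim 0 fun b => dipole (List.ofFn b)

lemma memL1_testMeasure {n : ℕ} (i : Option (Fin n → Bool)) : MemL1 (testMeasure n i) := by
  cases i with
  | none => simp [testMeasure, MemL1]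
  | some b => exact memL1_single_sub_single _ _ _

lemma l1Norm_testMeasure_le {n : ℕ} (i : Option (Fin n → Bool)) : l1Norm (testMeasure n i) ≤ 1 := by
  cases i with
  | none => simp [testMeasure, l1Norm]
  | some b => exact (l1Norm_single_sub_single_le _ _ _).trans_eq (by norm_num)

lemma Vstar_testMeasure_eq_zero_of_mem_offspringPath {n : ℕ} {b : Fin n → Bool}
    {j : Option (Fin n → Bool)} (hj : j ≠ some b) {u : Node}
    (hu : u ∈ offspringPath (List.ofFn b)) :
    Vstar (testMeasure n j) u = 0 := by
  cases j with
  | none => simp [testMeasure, Vstar_zero]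
  | some b' =>
    refine Vstar_dipole_eq_zero_of_mem_offspringPath (by simp) (fun h => hj ?_) hu
    rw [List.ofFn_injective h]

lemma ofReal_le_distSqW_testMeasure {β : ℝ} (hβ : 0 ≤ β) {n : ℕ} (hn : 0 < n) (b : Fin n → Bool)
    {j : Option (Fin n → Bool)} (hj : j ≠ some b) :
    ENNReal.ofReal (n * ((3 * n) ^ (-β) * (1 / 2) ^ 2)) ≤
      distSqW β (Vstar (testMeasure n (some b))) (Vstar (testMeasure n j)) := by
  have hlen : ∀ u ∈ offspringPath (List.ofFn b), 1 + (u.length : ℝ) ≤ 3 * n := by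
    intro u hu
    have := (mem_offspringPath.mp hu).1.length_le
    rw [length_offspring, List.length_ofFn] at this
    exact_mod_cast (by omega : 1 + u.length ≤ 3 * n)
  have hgap : ∀ u ∈ offspringPath (List.ofFn b), ((1 : ℝ) / 2) ^ 2 ≤
      (Vstar (testMeasure n (some b)) u - Vstar (testMeasure n j) u) ^ 2 := by
    intro u hu
    rw [Vstar_testMeasure_eq_zero_of_mem_offspringPath hj hu, sub_zero]
    exact (congrArg (· ^ 2) (Vstar_dipole_of_mem_offspringPath hu)).ge
  simpa [card_offspringPath] using ofReal_card_mul_le_distSqW hβ _ hlen hgap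

lemma pairwise_ofReal_le_distSqW_testMeasure {β : ℝ} (hβ : 0 ≤ β) {n : ℕ} (hn : 0 < n) :
    Pairwise fun i j : Option (Fin n → Bool) =>
      ENNReal.ofReal (n * ((3 * n) ^ (-β) * (1 / 2) ^ 2)) ≤
        distSqW β (Vstar (testMeasure n i)) (Vstar (testMeasure n j)) := by
  rintro (_ | b) j hij
  · obtain ⟨b, rfl⟩ := Option.ne_none_iff_exists'.mp hij.symm
    rw [distSqW_comm]
    exact ofReal_le_distSqW_testMeasure hβ hn b hij
  · exact ofReal_le_distSqW_testMeasure hβ hn b hij.symm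

lemma four_mul_radius_sq_eq {β : ℝ} {n : ℕ} (hn : 0 < n) :
    4 * ((3 : ℝ) ^ (-(β / 2)) / 2 / 2 * (n : ℝ) ^ (-((β - 1) / 2))) ^ 2 =
      n * ((3 * n) ^ (-β) * (1 / 2) ^ 2) := by
  have hn' : (0 : ℝ) < n := by exact_mod_cast hn
  have hsq {x : ℝ} (hx : 0 ≤ x) (a : ℝ) : (x ^ (-(a / 2))) ^ 2 = x ^ (-a) := by
    rw [← Real.rpow_natCast, ← Real.rpow_mul hx]; norm_num
  rw [mul_pow, div_pow, div_pow, hsq zero_le_three, hsq hn'.le,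
    Real.mul_rpow zero_le_three hn'.le, show -(β - 1) = -β + 1 by ring, Real.rpow_add_one hn'.ne']
  ring

/-- Lower bound `e_{n+1}(V*) ≥ (C₁/2) n^{-(β-1)/2}` for `β > 1`: there is `C₁ > 0`
such that for every positive `n`, no family of `2^{(n+1)-1} = 2^n` balls of radius
smaller than `(C₁/2) n^{-(β-1)/2}` can cover the image of the unit ball of `ℓ₁(T)`
under `V*`; equivalently, for every set of `2^n` prospective centers in `ℓ₂(T,W)`
there is a point of the image at distance at least `(C₁/2) n^{-(β-1)/2}`
from all of them. -/
theorem entropy_lower_bound_regular (β : ℝ) (hβ : 1 < β) :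
    ∃ C : ℝ, 0 < C ∧ ∀ n : ℕ, 0 < n →
      ∀ N : Finset (Node → ℝ), N.card ≤ 2 ^ n →
        ∃ μ : Node → ℝ, MemL1 μ ∧ l1Norm μ ≤ 1 ∧
          ∀ g ∈ N,
            ENNReal.ofReal ((C / 2 * (n : ℝ) ^ (-((β - 1) / 2))) ^ 2) ≤
              distSqW β (Vstar μ) g := by
  refine ⟨(3 : ℝ) ^ (-(β / 2)) / 2, by positivity, fun n hn N hN => ?_⟩
  have hsep := pairwise_ofReal_le_distSqW_testMeasure (by linarith : 0 ≤ β) hn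
  obtain ⟨i, hi⟩ := exists_forall_le_of_card_lt (distSqW β) (distSqW_comm β)
    (distSqW_le_two_mul_add β) (x := fun i => Vstar (testMeasure n i))
    (fun i j hij => by
      rw [← ENNReal.ofReal_ofNat 4, ← ENNReal.ofReal_mul zero_le_four, four_mul_radius_sq_eq hn]
      exact hsep hij)
    (N := N) (by simpa [Nat.lt_succ_iff] using hN)
  exact ⟨testMeasure n i, memL1_testMeasure i, l1Norm_testMeasure_le i, hi⟩
end

section
/- Let T be the infinite binary tree with weight w(t) = (1+|t|)^{-β} where β ≥ 2, and let V* : ℓ₁(T) → ℓ₂(T,W) be the operator (V*μ)(t) = Σ_{u ⪰ t} μ(u). Then there exists a constant C₁ = C₁(β) > 0 such that for all integers k ≥ 2, e_k(V*) ≥ C₁ · (ln k)^{1-β/2} · k^{-1/2}. -/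
open scoped ENNReal

/-!
Put `r = ⌊log₂ k⌋` and `e = ⌊k / (r + 1)⌋ + 1`. A word `c` of length `m = 2e` over an alphabet of
size `q = 2^(r+3)` is encoded as the probability measure `μ_c` with mass `1/m` at each of `m` leaves
of depth `3r + 5`: leaf `i` lies below the binary code of `i`, followed by that of the symbol `c i`,
followed by `r` more levels. Wherever `c i ≠ c' i`, the functions `V*μ_c` and `V*μ_c'` differ by
`1/m` at the `r` nodes just above leaf `i`, so `‖V*μ_c - V*μ_c'‖² ≳ d_H(c, c') · r · r^(-β) / m²`.

If every `V*μ_c` were within `ε` of one of `2^(k-1)` centres then, since a Hamming ball of radius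
`e` holds at most `2^m q^e` words and `2^(k-1) · 2^m q^e < q^m`, two words at Hamming distance `> e`
would share a centre; the quasi-triangle inequality `d(f, h)² ≤ 2 d(f, g)² + 2 d(g, h)²` then
bounds `ε` below by a multiple of `(log k)^(1 - β/2) k^(-1/2)`.
-/

namespace EntropyLowerBound

open Finset

def bits (len x : ℕ) : Node := (List.range len).map x.testBit

@[simp] lemma length_bits (len x : ℕ) : (bits len x).length = len := by simp [bits]

lemma bits_inj {len x y : ℕ} (hx : x < 2 ^ len) (hy : y < 2 ^ len)
    (h : bits len x = bits len y) : x = y := by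
  refine Nat.eq_of_testBit_eq fun i => ?_
  by_cases hi : i < len
  · simpa [bits] using List.getElem_of_eq h (i := i) (by simpa using hi)
  · have hlen : 2 ^ len ≤ 2 ^ i := Nat.pow_le_pow_right two_pos (not_lt.mp hi)
    rw [Nat.testBit_eq_false_of_lt (hx.trans_le hlen),
      Nat.testBit_eq_false_of_lt (hy.trans_le hlen)]

def pathNode (a b i x n : ℕ) : Node := bits a i ++ bits b x ++ List.replicate n false

@[simp] lemma length_pathNode (a b i x n : ℕ) : (pathNode a b i x n).length = a + b + n := by
  simp [pathNode, add_assoc]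

variable {a b i i' x x' n n' : ℕ}

lemma pathNode_prefix_pathNode_iff (hi : i < 2 ^ a) (hi' : i' < 2 ^ a) (hx : x < 2 ^ b)
    (hx' : x' < 2 ^ b) :
    pathNode a b i x n <+: pathNode a b i' x' n' ↔ i = i' ∧ x = x' ∧ n ≤ n' := by
  constructor
  · intro h
    have hcode : bits a i ++ bits b x = bits a i' ++ bits b x' := by
      have h' := (List.prefix_append _ _).trans h
      rw [pathNode, List.isPrefix_append_of_length (by simp)] at h'
      exact h'.eq_of_length (by simp)
    obtain ⟨hbi, hbx⟩ := List.append_inj hcode (by simp)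
    rw [pathNode, pathNode, hcode, List.prefix_append_right_inj] at h
    exact ⟨bits_inj hi hi' hbi, bits_inj hx hx' hbx, by simpa using h.length_le⟩
  · rintro ⟨rfl, rfl, hn⟩
    rw [pathNode, pathNode, List.prefix_append_right_inj, List.prefix_replicate_iff]
    simpa using hn

lemma pathNode_inj (hi : i < 2 ^ a) (hi' : i' < 2 ^ a) (hx : x < 2 ^ b) (hx' : x' < 2 ^ b)
    (h : pathNode a b i x n = pathNode a b i' x' n') : i = i' ∧ x = x' ∧ n = n' := by
  have hprefix : pathNode a b i x n <+: pathNode a b i' x' n' := h ▸ List.prefix_refl _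
  obtain ⟨rfl, rfl, -⟩ := (pathNode_prefix_pathNode_iff hi hi' hx hx').1 hprefix
  exact ⟨rfl, rfl, by simpa using congrArg List.length h⟩

section CodeMeasure

variable (a b L : ℕ) {m q : ℕ}

def codeLeaf (c : Fin m → Fin q) (i : Fin m) : Node := pathNode a b i (c i) L

noncomputable def codeMeasure (c : Fin m → Fin q) (t : Node) : ℝ :=
  if t ∈ univ.image (codeLeaf a b L c) then (m : ℝ)⁻¹ else 0

variable {a b L}

lemma memL1_codeMeasure (c : Fin m → Fin q) : MemL1 (codeMeasure a b L c) :=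
  summable_of_ne_finset_zero (s := univ.image (codeLeaf a b L c)) fun t ht => by
    simp [codeMeasure, ht]

lemma l1Norm_codeMeasure_le (c : Fin m → Fin q) : l1Norm (codeMeasure a b L c) ≤ 1 := by
  rw [l1Norm, tsum_eq_sum (s := univ.image (codeLeaf a b L c)) fun t ht => by
    simp [codeMeasure, ht]]
  calc ∑ t ∈ univ.image (codeLeaf a b L c), |codeMeasure a b L c t|
      = #(univ.image (codeLeaf a b L c)) * (m : ℝ)⁻¹ := by
        rw [sum_congr rfl fun t ht => by rw [codeMeasure, if_pos ht, abs_inv, Nat.abs_cast],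
          sum_const, nsmul_eq_mul]
    _ ≤ m * (m : ℝ)⁻¹ := by
        gcongr
        exact_mod_cast card_image_le.trans (card_univ.trans (Fintype.card_fin m)).le
    _ ≤ 1 := mul_inv_le_one_of_le₀ le_rfl (Nat.cast_nonneg m)

variable (hm : m ≤ 2 ^ a) (hq : q ≤ 2 ^ b)
include hm hq

lemma pathNode_prefix_codeLeaf_iff {c c' : Fin m → Fin q} {i i' : Fin m} (hn : n ≤ L) :
    pathNode a b i (c i) n <+: codeLeaf a b L c' i' ↔ i = i' ∧ c i = c' i' := by
  rw [codeLeaf, pathNode_prefix_pathNode_iff (i.2.trans_le hm) (i'.2.trans_le hm)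
    ((c i).2.trans_le hq) ((c' i').2.trans_le hq)]
  simp [Fin.val_inj, hn]

lemma Vstar_codeMeasure_pathNode (c c' : Fin m → Fin q) (i : Fin m) (hn : n ≤ L) :
    Vstar (codeMeasure a b L c') (pathNode a b i (c i) n) =
      if c' i = c i then (m : ℝ)⁻¹ else 0 := by
  have hsupp : ∀ u, pathNode a b i (c i) n <+: u → codeMeasure a b L c' u ≠ 0 →
      u = codeLeaf a b L c' i ∧ c' i = c i := by
    intro u hu hne
    obtain ⟨i', -, rfl⟩ := mem_image.1 (by_contra fun h => hne (if_neg h))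
    obtain ⟨rfl, h⟩ := (pathNode_prefix_codeLeaf_iff hm hq hn).1 hu
    exact ⟨rfl, h.symm⟩
  split_ifs with h
  · have hleaf := (pathNode_prefix_codeLeaf_iff hm hq hn (i' := i)).2 ⟨rfl, h.symm⟩
    rw [Vstar, tsum_eq_single ⟨_, hleaf⟩]
    · exact if_pos (mem_image_of_mem _ (mem_univ i))
    · rintro ⟨u, hu⟩ hne
      by_contra h0
      exact hne (Subtype.ext (hsupp u hu h0).1)
  · rw [Vstar, ← tsum_zero]
    exact tsum_congr fun u => by_contra fun h0 => h (hsupp u.1 u.2 h0).2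

end CodeMeasure


lemma rpow_neg_le_wgt {β ℓ : ℝ} (hβ : 0 ≤ β) {t : Node} (ht : (t.length : ℝ) ≤ ℓ) :
    (1 + ℓ) ^ (-β) ≤ wgt β t :=
  Real.rpow_le_rpow_of_nonpos (by positivity) (by linarith) (neg_nonpos.2 hβ)

lemma distSqW_le_two_mul_add (β : ℝ) (f g h : Node → ℝ) :
    distSqW β f h ≤ 2 * distSqW β f g + 2 * distSqW β g h := by
  rw [distSqW, distSqW, distSqW, ← ENNReal.tsum_mul_left, ← ENNReal.tsum_mul_left,
    ← ENNReal.tsum_add]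
  refine ENNReal.tsum_le_tsum fun t => ?_
  have hw : 0 ≤ wgt β t := Real.rpow_nonneg (by positivity) _
  rw [← ENNReal.ofReal_ofNat 2, ← ENNReal.ofReal_mul zero_le_two, ← ENNReal.ofReal_mul zero_le_two,
    ← ENNReal.ofReal_add (by positivity) (by positivity)]
  refine ENNReal.ofReal_le_ofReal ?_
  nlinarith [mul_nonneg hw (sq_nonneg (f t - 2 * g t + h t))]

lemma distSqW_lt_four_mul {β : ℝ} {f g h : Node → ℝ} {E : ℝ≥0∞} (hf : distSqW β f g < E)
    (hh : distSqW β h g < E) : distSqW β f h < 4 * E := by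
  have hh' : distSqW β g h < E := by
    rwa [distSqW, tsum_congr fun t => by rw [← neg_sub, neg_sq]]
  calc distSqW β f h ≤ 2 * distSqW β f g + 2 * distSqW β g h := distSqW_le_two_mul_add β f g h
    _ < 2 * E + 2 * E := by gcongr <;> norm_num
    _ = 4 * E := by ring

lemma ofReal_le_distSqW_codeMeasure {β : ℝ} (hβ : 0 ≤ β) {a b L m q : ℕ} (hm : m ≤ 2 ^ a)
    (hq : q ≤ 2 ^ b) (c c' : Fin m → Fin q) :
    ENNReal.ofReal (hammingDist c c' * L * (1 + ((a + b + L : ℕ) : ℝ)) ^ (-β) / m ^ 2) ≤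
      distSqW β (Vstar (codeMeasure a b L c)) (Vstar (codeMeasure a b L c')) := by
  classical
  set D := ({i | c i ≠ c' i} : Finset (Fin m))
  set probes := (D ×ˢ range L).image fun p => pathNode a b p.1 (c p.1) p.2
  have hcard : probes.card = hammingDist c c' * L := by
    rw [card_image_of_injOn, card_product, card_range, hammingDist]
    rintro ⟨i, n⟩ - ⟨i', n'⟩ - h
    obtain ⟨hi, -, hn⟩ := pathNode_inj (i.2.trans_le hm) (i'.2.trans_le hm) ((c i).2.trans_le hq)
      ((c i').2.trans_le hq) h
    exact Prod.ext (Fin.ext hi) hn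
  have hterm : ∀ t ∈ probes, ENNReal.ofReal ((1 + ((a + b + L : ℕ) : ℝ)) ^ (-β) / m ^ 2) ≤
      ENNReal.ofReal (wgt β t *
        (Vstar (codeMeasure a b L c) t - Vstar (codeMeasure a b L c') t) ^ 2) := by
    simp only [probes, mem_image, mem_product, mem_range]
    rintro _ ⟨⟨i, n⟩, ⟨hi, hn⟩, rfl⟩
    have hci : c' i ≠ c i := ((mem_filter.1 hi).2).symm
    rw [Vstar_codeMeasure_pathNode hm hq c c i hn.le,
      Vstar_codeMeasure_pathNode hm hq c c' i hn.le, if_pos rfl, if_neg hci, sub_zero, inv_pow,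
      ← div_eq_mul_inv]
    refine ENNReal.ofReal_le_ofReal
      (div_le_div_of_nonneg_right (rpow_neg_le_wgt hβ ?_) (by positivity))
    simp only [length_pathNode]
    exact_mod_cast (by omega : a + b + n ≤ a + b + L)
  calc ENNReal.ofReal (hammingDist c c' * L * (1 + ((a + b + L : ℕ) : ℝ)) ^ (-β) / m ^ 2)
      = probes.card • ENNReal.ofReal ((1 + ((a + b + L : ℕ) : ℝ)) ^ (-β) / m ^ 2) := by
        rw [hcard, nsmul_eq_mul, mul_div_assoc, ENNReal.ofReal_mul (by positivity)]
        norm_cast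
    _ ≤ ∑ t ∈ probes, ENNReal.ofReal (wgt β t *
          (Vstar (codeMeasure a b L c) t - Vstar (codeMeasure a b L c') t) ^ 2) :=
        card_nsmul_le_sum _ _ _ hterm
    _ ≤ _ := ENNReal.sum_le_tsum _

lemma card_hammingBall_le {m q : ℕ} (s : Fin m → Fin q) (e : ℕ) (hq : 1 ≤ q) :
    #{x | hammingDist x s ≤ e} ≤ 2 ^ m * q ^ e := by
  classical
  set supports := (univ : Finset (Fin m)).powerset.filter fun D => #D ≤ e
  have hcover : ({x | hammingDist x s ≤ e} : Finset (Fin m → Fin q)) ⊆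
      supports.biUnion fun D => Fintype.piFinset fun i => if i ∈ D then univ else {s i} := by
    intro x hx
    refine mem_biUnion.2 ⟨({i | x i ≠ s i} : Finset (Fin m)), ?_, ?_⟩
    · simpa [supports, hammingDist] using (mem_filter.1 hx).2
    · simp only [Fintype.mem_piFinset]
      intro i
      split_ifs with h
      · exact mem_univ _
      · simpa using h
  have hfiber : ∀ D ∈ supports,
      #(Fintype.piFinset fun i => if i ∈ D then univ else {s i}) ≤ q ^ e := by
    intro D hD
    rw [Fintype.card_piFinset]
    simp only [apply_ite card, card_univ, Fintype.card_fin, card_singleton]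
    rw [prod_ite_mem, univ_inter, prod_const]
    exact Nat.pow_le_pow_right hq (mem_filter.1 hD).2
  calc #{x | hammingDist x s ≤ e} ≤ ∑ D ∈ supports, q ^ e :=
        (card_le_card hcover).trans (card_biUnion_le.trans (sum_le_sum hfiber))
    _ = #supports * q ^ e := by rw [sum_const, smul_eq_mul]
    _ ≤ 2 ^ m * q ^ e := by
        gcongr
        exact (card_filter_le _ _).trans (by simp)

lemma exists_far_pair_of_card_lt {α γ : Type*} [Fintype α] (d : α → α → ℕ) {e B : ℕ}
    (hball : ∀ s, #{x | d x s ≤ e} ≤ B) (f : α → γ) (N : Finset γ) (hf : ∀ x, f x ∈ N)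
    (hcard : #N * B < Fintype.card α) : ∃ x y, f x = f y ∧ e < d x y := by
  classical
  obtain ⟨g, -, hfiber⟩ :=
    exists_lt_card_fiber_of_mul_lt_card_of_maps_to (s := univ) (fun x _ => hf x) hcard
  obtain ⟨y, hy⟩ := card_pos.1 (B.zero_le.trans_lt hfiber)
  by_contra! hnear
  refine (hfiber.trans_le ((card_le_card fun x hx => ?_).trans (hball y))).false
  simp only [mem_filter, mem_univ, true_and] at hx hy ⊢
  exact hnear x y (hx.trans hy.symm)

lemma exists_forall_le_distSqW {α : Type*} [Fintype α] (d : α → α → ℕ) {e B : ℕ}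
    (hball : ∀ s, #{x | d x s ≤ e} ≤ B) {β : ℝ} (F : α → Node → ℝ) {E : ℝ≥0∞}
    (hsep : ∀ x y, e < d x y → 4 * E ≤ distSqW β (F x) (F y)) (N : Finset (Node → ℝ))
    (hcard : #N * B < Fintype.card α) : ∃ x, ∀ g ∈ N, E ≤ distSqW β (F x) g := by
  by_contra! hclose
  choose center hcenter hlt using hclose
  obtain ⟨x, y, hxy, hfar⟩ := exists_far_pair_of_card_lt d hball center N hcenter hcard
  exact (hsep x y hfar).not_gt (distSqW_lt_four_mul (hlt x) (hxy ▸ hlt y))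

lemma two_pow_mul_lt_pow {k r e : ℕ} (h : k < (r + 1) * e) :
    2 ^ (k - 1) * (2 ^ (2 * e) * (2 ^ (r + 3)) ^ e) < (2 ^ (r + 3)) ^ (2 * e) := by
  rw [← pow_mul, ← pow_mul, ← pow_add, ← pow_add]
  refine Nat.pow_lt_pow_right one_lt_two ?_
  have h₁ : (r + 3) * e = (r + 1) * e + 2 * e := by ring
  have h₂ : (r + 3) * (2 * e) = 2 * ((r + 1) * e) + 4 * e := by ring
  omega

lemma log_lt_natLog_add_one (k : ℕ) : Real.log k < Nat.log 2 k + 1 := by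
  have hlogb : Real.logb 2 k < Nat.log 2 k + 1 := by
    simpa [← Real.natFloor_logb_natCast] using Nat.lt_floor_add_one (Real.logb 2 k)
  refine lt_of_le_of_lt ?_ hlogb
  rw [Real.logb, le_div_iff₀ (Real.log_pos one_lt_two)]
  exact mul_le_of_le_one_right (Real.log_natCast_nonneg k)
    (Real.log_two_lt_d9.le.trans (by norm_num))

lemma natLog_le_two_mul_log (k : ℕ) : (Nat.log 2 k : ℝ) ≤ 2 * Real.log k := by
  refine (Real.natLog_le_logb k 2).trans ?_
  rw [Nat.cast_ofNat, Real.logb, div_le_iff₀ (Real.log_pos one_lt_two)]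
  nlinarith [Real.log_two_gt_d9, Real.log_natCast_nonneg k]

lemma four_mul_sq_le {β lk r e k : ℝ} (hβ : 0 ≤ β) (hlk : 0 < lk) (hr : 1 ≤ r) (he : 0 < e)
    (hlkr : lk ≤ r + 1) (hrlk : r ≤ 2 * lk) (hek : e * (r + 1) ≤ 2 * k) :
    4 * ((18 : ℝ) ^ (-β) / 12 * lk ^ (1 - β / 2) * k ^ (-(1 : ℝ) / 2)) ^ 2 ≤
      e * r * (3 * r + 6) ^ (-β) / (2 * e) ^ 2 := by
  have hk : 0 < k := by nlinarith
  set P := (18 : ℝ) ^ (-β)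
  set W := lk ^ (-β)
  have hP1 : P ≤ 1 := Real.rpow_le_one_of_one_le_of_nonpos (by norm_num) (neg_nonpos.2 hβ)
  have hlk_sq : (lk ^ (1 - β / 2)) ^ 2 = lk ^ 2 * W := by
    rw [← Real.rpow_natCast, ← Real.rpow_mul hlk.le,
      show (1 - β / 2) * ((2 : ℕ) : ℝ) = (2 : ℕ) + -β by push_cast; ring,
      Real.rpow_add hlk, Real.rpow_natCast]
  have hk_sq : (k ^ (-(1 : ℝ) / 2)) ^ 2 = k⁻¹ := by
    rw [← Real.rpow_natCast, ← Real.rpow_mul hk.le]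
    norm_num [Real.rpow_neg_one]
  have hdepth : P * W ≤ (3 * r + 6) ^ (-β) := by
    rw [← Real.mul_rpow (by norm_num) hlk.le]
    exact Real.rpow_le_rpow_of_nonpos (by positivity) (by linarith) (neg_nonpos.2 hβ)
  have hcount : P * lk ^ 2 * e ≤ 9 * k * r := by
    have h₁ : P * (lk ^ 2 * e) ≤ lk ^ 2 * e := mul_le_of_le_one_left (by positivity) hP1
    have h₂ : lk ^ 2 * e ≤ lk * (e * (r + 1)) := by nlinarith [mul_pos hlk he]
    have h₃ : lk * (e * (r + 1)) ≤ 2 * r * (2 * k) :=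
      mul_le_mul (by linarith) hek (by positivity) (by positivity)
    nlinarith
  calc 4 * (P / 12 * lk ^ (1 - β / 2) * k ^ (-(1 : ℝ) / 2)) ^ 2
      = P * W * (P * lk ^ 2 * e) / (36 * k * e) := by
        rw [mul_pow, mul_pow, hlk_sq, hk_sq]
        field_simp
        ring
    _ ≤ P * W * (9 * k * r) / (36 * k * e) := by gcongr
    _ = r * (P * W) / (4 * e) := by field_simp; ring
    _ ≤ r * (3 * r + 6) ^ (-β) / (4 * e) := by gcongr
    _ = e * r * (3 * r + 6) ^ (-β) / (2 * e) ^ 2 := by field_simp; ring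

def hammingRadius (k : ℕ) : ℕ := k / (Nat.log 2 k + 1) + 1

lemma lt_mul_hammingRadius (k : ℕ) : k < (Nat.log 2 k + 1) * hammingRadius k :=
  Nat.lt_mul_div_succ k (Nat.succ_pos _)

variable {k : ℕ}

lemma hammingRadius_mul_le (hk : 2 ≤ k) : hammingRadius k * (Nat.log 2 k + 1) ≤ 2 * k := by
  have h₁ := Nat.div_mul_le_self k (Nat.log 2 k + 1)
  have h₂ := (Nat.lt_two_pow_self (n := Nat.log 2 k)).trans_le (Nat.pow_log_le_self 2 (by omega))
  rw [hammingRadius, add_mul, one_mul]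
  omega

lemma two_mul_hammingRadius_le (hk : 2 ≤ k) : 2 * hammingRadius k ≤ 2 ^ (Nat.log 2 k + 2) := by
  have h₁ := Nat.div_lt_self (by omega : 0 < k)
    (by simpa using Nat.log_pos one_lt_two hk : 1 < Nat.log 2 k + 1)
  have h₂ : k < 2 ^ (Nat.log 2 k + 1) := Nat.lt_pow_succ_log_self one_lt_two k
  rw [hammingRadius, pow_succ _ (Nat.log 2 k + 1)]
  omega

lemma four_mul_ofReal_le_distSqW {β : ℝ} (hβ : 0 ≤ β) (hk : 2 ≤ k)
    (c c' : Fin (2 * hammingRadius k) → Fin (2 ^ (Nat.log 2 k + 3)))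
    (hfar : hammingRadius k < hammingDist c c') :
    4 * ENNReal.ofReal
        (((18 : ℝ) ^ (-β) / 12 * Real.log k ^ (1 - β / 2) * (k : ℝ) ^ (-(1 : ℝ) / 2)) ^ 2) ≤
      distSqW β (Vstar (codeMeasure (Nat.log 2 k + 2) (Nat.log 2 k + 3) (Nat.log 2 k) c))
        (Vstar (codeMeasure (Nat.log 2 k + 2) (Nat.log 2 k + 3) (Nat.log 2 k) c')) := by
  rw [← ENNReal.ofReal_ofNat, ← ENNReal.ofReal_mul zero_le_four]
  refine le_trans (ENNReal.ofReal_le_ofReal ?_)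
    (ofReal_le_distSqW_codeMeasure hβ (two_mul_hammingRadius_le hk) le_rfl c c')
  set r := Nat.log 2 k
  set e := hammingRadius k
  have hdepth : (1 + ((r + 2 + (r + 3) + r : ℕ) : ℝ)) = 3 * r + 6 := by push_cast; ring
  calc _ ≤ (e : ℝ) * r * (3 * r + 6) ^ (-β) / (2 * e) ^ 2 :=
        four_mul_sq_le hβ (Real.log_pos (by exact_mod_cast hk))
          (by exact_mod_cast Nat.log_pos one_lt_two hk) (Nat.cast_pos.2 (Nat.succ_pos _))
          (log_lt_natLog_add_one k).le (natLog_le_two_mul_log k)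
          (by exact_mod_cast hammingRadius_mul_le hk)
    _ ≤ _ := by
        rw [hdepth]
        push_cast
        gcongr

end EntropyLowerBound

open EntropyLowerBound in
/-- Lower bound `e_k(V*) ≥ C₁ (ln k)^{1-β/2} k^{-1/2}` for `β ≥ 2`: there is `C₁ > 0`
such that for every `k ≥ 2`, no family of `2^{k-1}` balls of radius smaller than
`C₁ (ln k)^{1-β/2} k^{-1/2}` can cover the image of the unit ball of `ℓ₁(T)` under `V*`;
equivalently, for every set of `2^{k-1}` prospective centers in `ℓ₂(T,W)` there is a
point of the image at distance at least `C₁ (ln k)^{1-β/2} k^{-1/2}` from all of them. -/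
theorem entropy_lower_bound_large_beta (β : ℝ) (hβ : 2 ≤ β) :
    ∃ C : ℝ, 0 < C ∧ ∀ k : ℕ, 2 ≤ k →
      ∀ N : Finset (Node → ℝ), N.card ≤ 2 ^ (k - 1) →
        ∃ μ : Node → ℝ, MemL1 μ ∧ l1Norm μ ≤ 1 ∧
          ∀ g ∈ N,
            ENNReal.ofReal ((C * Real.log k ^ (1 - β / 2) * (k : ℝ) ^ (-(1 : ℝ) / 2)) ^ 2) ≤
              distSqW β (Vstar μ) g := by
  refine ⟨(18 : ℝ) ^ (-β) / 12, by positivity, fun k hk N hN => ?_⟩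
  have hcard : N.card * (2 ^ (2 * hammingRadius k) * (2 ^ (Nat.log 2 k + 3)) ^ hammingRadius k) <
      Fintype.card (Fin (2 * hammingRadius k) → Fin (2 ^ (Nat.log 2 k + 3))) := by
    simpa using (Nat.mul_le_mul_right _ hN).trans_lt
      (two_pow_mul_lt_pow (lt_mul_hammingRadius k))
  obtain ⟨c, hc⟩ := exists_forall_le_distSqW hammingDist
    (card_hammingBall_le · _ Nat.one_le_two_pow) _
    (four_mul_ofReal_le_distSqW (by linarith) hk) N hcard
  exact ⟨_, memL1_codeMeasure c, l1Norm_codeMeasure_le c, hc⟩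
end

section
/- Let T be the infinite binary tree with the critical weight w(t) = (1+|t|)^{-2}, and let V* : ℓ₁(T) → ℓ₂(T,W) be the operator (V*μ)(t) = Σ_{u ⪰ t} μ(u). Then there exists a numerical constant C such that for all positive integers n, e_n(V*) ≤ C · n^{-1/2}. -/
/-!
Write `μ = μ⁺ - μ⁻`. For a nonnegative `ν` of mass at most one, `f = V*ν` satisfies
`f(t0) + f(t1) ≤ f(t) ≤ 1`. The integer profile `⌊s f⌋`, set to zero wherever it does not
exceed the level `|t|`, keeps this property, lives on fewer than `s` levels, and is determined
by a binary code of length at most `1 + 4s`; so there are at most `3^(1+4s)` such profiles.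

The error is controlled by the critical tail `Σ_{k ≥ m} (1+k)^{-2} ≤ 2/(1+m)`, which gives
`Σ_{t ⪰ r} w(t) f(t) ≤ 2 mass_r(ν) / (1+|r|)`. Where the profile is kept, the rounding error
is at most `1/s`; below a topmost discarded node `r` one has `f ≤ (1+|r|)/s`, and the factor
`1 + |r|` is cancelled by the subtree bound. Each part costs `2/s`, so squared radius `≍ 1/s`
is reached with `log₂ N ≍ s` centres, i.e. `e_n ≲ n^{-1/2}`.
-/

open scoped ENNReal

namespace TreeEntropy

section SubtreeMass

variable (ν : Node → ℝ≥0∞)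

noncomputable def subtreeMass (t : Node) : ℝ≥0∞ := ∑' u : {u : Node // t <+: u}, ν u

lemma prefix_eq_of_prefix_of_length_eq {a b u : Node} (ha : a <+: u) (hb : b <+: u)
    (h : a.length = b.length) : a = b :=
  (List.prefix_of_prefix_length_le ha hb h.le).eq_of_length h

lemma tsum_subtreeMass_le_of_disjoint {ι : Type*} (r : Node) (a : ι → Node)
    (hr : ∀ i, r <+: a i) (hdisj : ∀ i j u, a i <+: u → a j <+: u → i = j) :
    ∑' i, subtreeMass ν (a i) ≤ subtreeMass ν r := by
  have hinj : Function.Injective fun p : Σ i, {u : Node // a i <+: u} =>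
      (⟨p.2.1, (hr p.1).trans p.2.2⟩ : {u : Node // r <+: u}) := by
    rintro ⟨i, u, hu⟩ ⟨j, v, hv⟩ h
    obtain rfl : u = v := congrArg Subtype.val h
    obtain rfl := hdisj i j u hu hv
    rfl
  calc ∑' i, subtreeMass ν (a i) = ∑' p : Σ i, {u : Node // a i <+: u}, ν p.2.1 :=
        (ENNReal.tsum_sigma' fun p : Σ i, {u : Node // a i <+: u} => ν p.2.1).symm
    _ ≤ subtreeMass ν r := ENNReal.tsum_comp_le_tsum_of_injective hinj fun u => ν u.1

lemma subtreeMass_children_le (t : Node) :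
    subtreeMass ν (t ++ [false]) + subtreeMass ν (t ++ [true]) ≤ subtreeMass ν t := by
  have := tsum_subtreeMass_le_of_disjoint ν t (fun b => t ++ [b]) (fun b => t.prefix_append _)
    fun b b' u hb hb' => by simpa using prefix_eq_of_prefix_of_length_eq hb hb' (by simp)
  rwa [tsum_bool] at this

lemma tsum_subtreeMass_level_le (r : Node) (j : ℕ) :
    ∑' v : {v : Node // v.length = j}, subtreeMass ν (r ++ v.1) ≤ subtreeMass ν r :=
  tsum_subtreeMass_le_of_disjoint ν r _ (fun v => r.prefix_append _) fun v v' u hv hv' =>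
    Subtype.ext <| List.append_cancel_left <|
      prefix_eq_of_prefix_of_length_eq hv hv' (by simp [v.2, v'.2])

def prefixMinimals (D : Set Node) : Set Node := {r | r ∈ D ∧ ∀ t ∈ D, t <+: r → t = r}

lemma exists_prefixMinimals_prefix {D : Set Node} {t : Node} (ht : t ∈ D) :
    ∃ r ∈ prefixMinimals D, r <+: t := by
  obtain ⟨r, ⟨hrt, hrD⟩, hmin⟩ := (measure List.length).wf.has_min {r | r <+: t ∧ r ∈ D}
    ⟨t, List.prefix_refl t, ht⟩
  refine ⟨r, ⟨hrD, fun u huD hur => ?_⟩, hrt⟩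
  exact hur.eq_of_length (le_antisymm hur.length_le
    (not_lt.1 fun h => hmin u ⟨hur.trans hrt, huD⟩ h))

lemma tsum_subtreeMass_prefixMinimals_le (D : Set Node) :
    ∑' r : prefixMinimals D, subtreeMass ν r ≤ subtreeMass ν [] := by
  refine tsum_subtreeMass_le_of_disjoint ν [] _ (fun r => List.nil_prefix) fun r r' u hr hr' => ?_
  rcases List.prefix_or_prefix_of_prefix hr hr' with h | h
  · exact Subtype.ext (r'.2.2 r r.2.1 h)
  · exact Subtype.ext (r.2.2 r' r'.2.1 h).symm

lemma tsum_subtype_le_tsum_prefixMinimals (D : Set Node) (g : Node → ℝ≥0∞) :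
    ∑' t : D, g t ≤ ∑' r : prefixMinimals D, ∑' u : {u : Node // r.1 <+: u}, g u := by
  choose top htop hle using fun t : D => exists_prefixMinimals_prefix t.2
  have hinj : Function.Injective fun t : D =>
      (⟨⟨top t, htop t⟩, ⟨t.1, hle t⟩⟩ : Σ r : prefixMinimals D, {u : Node // r.1 <+: u}) :=
    fun t t' h => Subtype.ext (congrArg (fun p => p.2.1) h)
  calc ∑' t : D, g t ≤ ∑' p : Σ r : prefixMinimals D, {u : Node // r.1 <+: u}, g p.2.1 :=
        ENNReal.tsum_comp_le_tsum_of_injective hinj _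
    _ = _ := ENNReal.tsum_sigma' _


lemma wgt_two (t : Node) : wgt 2 t = ((1 + t.length : ℝ) ^ 2)⁻¹ := by
  rw [wgt, Real.rpow_neg (by positivity), ← Real.rpow_natCast]
  norm_num

lemma tsum_ofReal_inv_sq_le (R : ℕ) :
    ∑' j : ℕ, ENNReal.ofReal (((1 + (R + j : ℕ) : ℝ) ^ 2)⁻¹) ≤ ENNReal.ofReal (2 / (1 + R)) := by
  refine ENNReal.tsum_le_of_sum_range_le fun K => ?_
  rw [← ENNReal.ofReal_sum_of_nonneg fun j _ => by positivity]
  refine ENNReal.ofReal_le_ofReal ?_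
  have h := sum_Ioo_inv_sq_le (α := ℝ) R (R + 1 + K)
  rw [← Finset.Ico_add_one_left_eq_Ioo, Finset.sum_Ico_eq_sum_range, add_tsub_cancel_left] at h
  calc _ = ∑ j ∈ Finset.range K, (((R + 1 + j : ℕ) : ℝ) ^ 2)⁻¹ :=
        Finset.sum_congr rfl fun j _ => by push_cast; ring_nf
    _ ≤ 2 / (R + 1) := h
    _ = 2 / (1 + R) := by rw [add_comm]

def prefixEquiv (r : Node) : Node ≃ {t : Node // r <+: t} where
  toFun v := ⟨r ++ v, r.prefix_append v⟩
  invFun t := t.1.drop r.length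
  left_inv v := by simp
  right_inv := by
    rintro ⟨_, v, rfl⟩
    simp

lemma tsum_wgt_mul_subtreeMass_le (r : Node) :
    ∑' t : {t : Node // r <+: t}, ENNReal.ofReal (wgt 2 t) * subtreeMass ν t
      ≤ ENNReal.ofReal (2 / (1 + r.length)) * subtreeMass ν r := by
  set w : ℕ → ℝ≥0∞ := fun j => ENNReal.ofReal (((1 + (r.length + j : ℕ) : ℝ) ^ 2)⁻¹)
  calc ∑' t : {t : Node // r <+: t}, ENNReal.ofReal (wgt 2 t) * subtreeMass ν t
      = ∑' v : Node, ENNReal.ofReal (wgt 2 (r ++ v)) * subtreeMass ν (r ++ v) :=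
        ((prefixEquiv r).tsum_eq fun t => ENNReal.ofReal (wgt 2 t) * subtreeMass ν t).symm
    _ = ∑' (j : ℕ) (v : {v : Node // v.length = j}),
          ENNReal.ofReal (wgt 2 (r ++ v.1)) * subtreeMass ν (r ++ v.1) := by
        rw [← (Equiv.sigmaFiberEquiv List.length).tsum_eq, ENNReal.tsum_sigma']
        rfl
    _ = ∑' j : ℕ, w j * ∑' v : {v : Node // v.length = j}, subtreeMass ν (r ++ v.1) := by
        refine tsum_congr fun j => ?_
        rw [← ENNReal.tsum_mul_left]
        refine tsum_congr fun v => ?_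
        rw [wgt_two, List.length_append, v.2]
    _ ≤ ∑' j : ℕ, w j * subtreeMass ν r :=
        ENNReal.tsum_le_tsum fun j => by gcongr; exact tsum_subtreeMass_level_le ν r j
    _ = (∑' j : ℕ, w j) * subtreeMass ν r := ENNReal.tsum_mul_right
    _ ≤ _ := by gcongr; exact tsum_ofReal_inv_sq_le _

lemma tsum_wgt_mul_subtreeMass_le_two :
    ∑' t : Node, ENNReal.ofReal (wgt 2 t) * subtreeMass ν t ≤ 2 * subtreeMass ν [] := by
  calc ∑' t : Node, ENNReal.ofReal (wgt 2 t) * subtreeMass ν t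
      = ∑' t : {t : Node // [] <+: t}, ENNReal.ofReal (wgt 2 t) * subtreeMass ν t :=
        ((Equiv.subtypeUnivEquiv fun t : Node => List.nil_prefix).tsum_eq
          fun t => ENNReal.ofReal (wgt 2 t) * subtreeMass ν t).symm
    _ ≤ ENNReal.ofReal (2 / (1 + ([] : Node).length)) * subtreeMass ν [] :=
        tsum_wgt_mul_subtreeMass_le ν []
    _ = 2 * subtreeMass ν [] := by simp

end SubtreeMass

def ChildSumLE {α : Type*} [Add α] [LE α] (f : Node → α) : Prop :=
  ∀ t : Node, f (t ++ [false]) + f (t ++ [true]) ≤ f t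

lemma ChildSumLE.child_le {α : Type*} [AddCommMonoid α] [PartialOrder α] [IsOrderedAddMonoid α]
    {f : Node → α} (hf : ChildSumLE f) (h0 : 0 ≤ f) (t : Node) (b : Bool) :
    f (t ++ [b]) ≤ f t := by
  cases b
  · exact (le_add_of_nonneg_right (h0 _)).trans (hf t)
  · exact (le_add_of_nonneg_left (h0 _)).trans (hf t)

lemma ChildSumLE.le_of_prefix {α : Type*} [AddCommMonoid α] [PartialOrder α]
    [IsOrderedAddMonoid α] {f : Node → α} (hf : ChildSumLE f) (h0 : 0 ≤ f) {t u : Node}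
    (h : t <+: u) : f u ≤ f t := by
  obtain ⟨v, rfl⟩ := h
  induction v generalizing t with
  | nil => simp
  | cons b v ih =>
    rw [← List.singleton_append, ← List.append_assoc]
    exact ih.trans (hf.child_le h0 t b)

section Vstar

variable {ν : Node → ℝ}

lemma Vstar_nonneg (hν : 0 ≤ ν) : 0 ≤ Vstar ν := fun _ => tsum_nonneg fun u => hν u.1

lemma ofReal_Vstar (hν : 0 ≤ ν) (hsum : Summable ν) (t : Node) :
    ENNReal.ofReal (Vstar ν t) = subtreeMass (fun u => ENNReal.ofReal (ν u)) t :=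
  ENNReal.ofReal_tsum_of_nonneg (fun u => hν u.1) (hsum.subtype _)

lemma Vstar_nil (ν : Node → ℝ) : Vstar ν [] = ∑' t, ν t :=
  (Equiv.subtypeUnivEquiv fun _ => List.nil_prefix).tsum_eq ν

lemma childSumLE_Vstar (hν : 0 ≤ ν) (hsum : Summable ν) : ChildSumLE (Vstar ν) := by
  intro t
  have h := subtreeMass_children_le (fun u => ENNReal.ofReal (ν u)) t
  rw [← ofReal_Vstar hν hsum, ← ofReal_Vstar hν hsum, ← ofReal_Vstar hν hsum,
    ← ENNReal.ofReal_add (Vstar_nonneg hν _) (Vstar_nonneg hν _)] at h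
  exact (ENNReal.ofReal_le_ofReal_iff (Vstar_nonneg hν _)).1 h

lemma Vstar_sub {μ : Node → ℝ} (hμ : Summable μ) (hν : Summable ν) :
    Vstar (μ - ν) = Vstar μ - Vstar ν :=
  funext fun _ => (hμ.subtype _).tsum_sub (hν.subtype _)

lemma abs_Vstar_le {μ : Node → ℝ} (hμ : MemL1 μ) (t : Node) :
    |Vstar μ t| ≤ Vstar (fun u => |μ u|) t := by
  simpa only [Real.norm_eq_abs, Vstar] using
    norm_tsum_le_tsum_norm (f := fun u : {u : Node // t <+: u} => μ u) (hμ.subtype _)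

end Vstar

structure Admissible (s : ℕ) (c : Node → ℕ) : Prop where
  root_le : c [] ≤ s
  childSumLE : ChildSumLE c
  length_lt : ∀ t, c t ≠ 0 → t.length < c t

lemma Admissible.le_root {s : ℕ} {c : Node → ℕ} (hc : Admissible s c) (t : Node) : c t ≤ s :=
  (hc.childSumLE.le_of_prefix (fun _ => Nat.zero_le _) List.nil_prefix).trans hc.root_le

/-- The excesses `c t - c (t0) - c (t1)` are written in unary; for `ChildSumLE c` they add up
to at most `c []`, which is what keeps the code short. -/
def encode (c : Node → ℕ) : ℕ → Node → List Bool
  | 0, _ => [false]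
  | fuel + 1, t =>
    if c t = 0 then [false]
    else true :: (List.replicate (c t - (c (t ++ [false]) + c (t ++ [true]))) true ++
      false :: (encode c fuel (t ++ [false]) ++ encode c fuel (t ++ [true])))

lemma encode_of_eq_zero {c : Node → ℕ} {t : Node} (h : c t = 0) (fuel : ℕ) :
    encode c fuel t = [false] := by
  cases fuel <;> simp [encode, h]

lemma length_encode_add_le {s : ℕ} {c : Node → ℕ} (hc : Admissible s c) (fuel : ℕ) {t : Node}
    (ht : c t ≠ 0) : (encode c fuel t).length + 3 * t.length ≤ 1 + 4 * c t := by
  induction fuel generalizing t with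
  | zero =>
    have := hc.length_lt t ht
    simp only [encode, List.length_singleton]
    omega
  | succ fuel ih =>
    have hsum := hc.childSumLE t
    have hlen : ∀ b : Bool, (t ++ [b]).length = t.length + 1 := by simp
    have hchild : ∀ b : Bool, (encode c fuel (t ++ [b])).length + 3 * (t.length + 1)
        ≤ 1 + 4 * c (t ++ [b]) ∨ (c (t ++ [b]) = 0 ∧ (encode c fuel (t ++ [b])).length = 1) :=
      fun b => (em (c (t ++ [b]) = 0)).elim (fun h => .inr ⟨h, by simp [encode_of_eq_zero h]⟩)
        fun h => .inl (hlen b ▸ ih h)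
    have := hc.length_lt t ht
    simp only [encode, ht, if_false, List.length_cons, List.length_append, List.length_replicate]
    rcases hchild false with h0 | h0 <;> rcases hchild true with h1 | h1 <;> omega

lemma length_encode_le {s : ℕ} {c : Node → ℕ} (hc : Admissible s c) (fuel : ℕ) :
    (encode c fuel []).length ≤ 1 + 4 * s := by
  by_cases h : c [] = 0
  · simp [encode_of_eq_zero h]
  · simpa using (length_encode_add_le hc fuel h).trans (by have := hc.root_le; omega)

lemma replicate_true_append_false_inj {a b : ℕ} {x y : List Bool}
    (h : List.replicate a true ++ false :: x = List.replicate b true ++ false :: y) :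
    a = b ∧ x = y := by
  induction a generalizing b with
  | zero => cases b <;> simp_all [List.replicate_succ]
  | succ a ih =>
    cases b with
    | zero => simp [List.replicate_succ] at h
    | succ b =>
      simp only [List.replicate_succ, List.cons_append, List.cons.injEq, true_and] at h
      exact (ih h).imp (congrArg (· + 1)) id

lemma ChildSumLE.eq_zero_of_prefix {c : Node → ℕ} (hc : ChildSumLE c) {t : Node} (ht : c t = 0)
    (u : Node) : c (t ++ u) = 0 :=
  Nat.le_zero.1 (ht ▸ hc.le_of_prefix (fun _ => Nat.zero_le _) (t.prefix_append u))

/-- `encode` is prefix-free on functions supported at depth `< fuel`. -/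
lemma eq_of_encode_append_eq {c c' : Node → ℕ} (hc : ChildSumLE c) (hc' : ChildSumLE c') :
    ∀ (fuel : ℕ) {t t' : Node} {l l' : List Bool},
      (∀ u, c (t ++ u) ≠ 0 → u.length < fuel) → (∀ u, c' (t' ++ u) ≠ 0 → u.length < fuel) →
      encode c fuel t ++ l = encode c' fuel t' ++ l' →
      (∀ u, c (t ++ u) = c' (t' ++ u)) ∧ l = l' := by
  intro fuel
  induction fuel with
  | zero =>
    intro t t' l l' hd hd' h
    refine ⟨fun u => ?_, by simpa [encode] using h⟩
    rw [not_imp_comm.1 (hd u) (Nat.not_lt_zero _), not_imp_comm.1 (hd' u) (Nat.not_lt_zero _)]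
  | succ fuel ih =>
    intro t t' l l' hd hd' h
    by_cases h0 : c t = 0 <;> by_cases h0' : c' t' = 0
    · refine ⟨fun u => ?_, by simpa [encode, h0, h0'] using h⟩
      rw [hc.eq_zero_of_prefix h0, hc'.eq_zero_of_prefix h0']
    · simp [encode, h0, h0'] at h
    · simp [encode, h0, h0'] at h
    · simp only [encode, h0, h0', if_false, List.cons_append, List.cons.injEq, true_and,
        List.append_assoc] at h
      obtain ⟨hm, h⟩ := replicate_true_append_false_inj h
      have hchild {d : Node → ℕ} {r : Node} (hd : ∀ u, d (r ++ u) ≠ 0 → u.length < fuel + 1)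
          (b : Bool) (u : Node) (hu : d (r ++ [b] ++ u) ≠ 0) : u.length < fuel := by
        simpa using hd (b :: u) (by simpa using hu)
      obtain ⟨h0c, h⟩ := ih (hchild hd false) (hchild hd' false) h
      obtain ⟨h1c, hl⟩ := ih (hchild hd true) (hchild hd' true) h
      refine ⟨fun u => ?_, hl⟩
      rcases u with _ | ⟨b, u⟩
      · have := hc t
        have := hc' t'
        have := h0c []
        have := h1c []
        simp only [List.append_nil] at *
        omega
      · rw [← List.singleton_append, ← List.append_assoc, ← List.append_assoc]
        cases b
        · exact h0c u
        · exact h1c u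

lemma encode_injOn (s : ℕ) :
    Set.InjOn (fun c => encode c s []) {c : Node → ℕ | Admissible s c} := by
  intro c hc c' hc' h
  have hdepth {d : Node → ℕ} (hd : Admissible s d) (u : Node) (hu : d ([] ++ u) ≠ 0) :
      u.length < s :=
    (hd.length_lt u (by simpa using hu)).trans_le (hd.le_root u)
  have := eq_of_encode_append_eq hc.childSumLE hc'.childSumLE s (hdepth hc) (hdepth hc')
    (l := []) (l' := []) (by simpa using h)
  exact funext fun u => by simpa using this.1 u

lemma exists_finset_admissible (s : ℕ) :
    ∃ F : Finset (Node → ℕ), (∀ c, Admissible s c → c ∈ F) ∧ F.card ≤ 3 ^ (1 + 4 * s) := by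
  set L := 1 + 4 * s
  let code : (Node → ℕ) → Fin L → Option Bool := fun c i => (encode c s [])[i.1]?
  have hinj : Set.InjOn code {c | Admissible s c} := by
    refine fun c hc c' hc' h => encode_injOn s hc hc' (List.ext_getElem? fun i => ?_)
    by_cases hi : i < L
    · exact congrFun h ⟨i, hi⟩
    · rw [List.getElem?_eq_none ((length_encode_le hc s).trans (not_lt.1 hi)),
        List.getElem?_eq_none ((length_encode_le hc' s).trans (not_lt.1 hi))]
  have hfin : {c | Admissible s c}.Finite := Set.Finite.of_finite_image (Set.toFinite _) hinj
  refine ⟨hfin.toFinset, fun c hc => hfin.mem_toFinset.2 hc, ?_⟩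
  rw [← Set.ncard_eq_toFinset_card _ hfin]
  calc {c | Admissible s c}.ncard ≤ (Set.univ : Set (Fin L → Option Bool)).ncard :=
        Set.ncard_le_ncard_of_injOn code (fun _ _ => Set.mem_univ _) hinj
    _ = 3 ^ L := by simp [Set.ncard_univ]

noncomputable def quantize (s : ℕ) (f : Node → ℝ) (t : Node) : ℕ := ⌊s * f t⌋₊

def truncate (c : Node → ℕ) (t : Node) : ℕ := if t.length < c t then c t else 0

noncomputable def approx (s : ℕ) (f : Node → ℝ) (t : Node) : ℝ :=
  truncate (quantize s f) t / s

def truncatedNodes (s : ℕ) (f : Node → ℝ) : Set Node := {t | quantize s f t ≤ t.length}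

section Quantize

variable {f : Node → ℝ}

lemma ChildSumLE.quantize (hf : ChildSumLE f) (h0 : 0 ≤ f) (s : ℕ) :
    ChildSumLE (quantize s f) := by
  intro t
  refine Nat.le_floor ?_
  simp only [TreeEntropy.quantize, Nat.cast_add]
  have := Nat.floor_le (mul_nonneg s.cast_nonneg (h0 (t ++ [false])))
  have := Nat.floor_le (mul_nonneg s.cast_nonneg (h0 (t ++ [true])))
  nlinarith [hf t, s.cast_nonneg (α := ℝ)]

lemma ChildSumLE.truncate {c : Node → ℕ} (hc : ChildSumLE c) : ChildSumLE (truncate c) := by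
  intro t
  have := hc t
  have := hc.child_le (fun _ => Nat.zero_le _) t false
  have := hc.child_le (fun _ => Nat.zero_le _) t true
  simp only [TreeEntropy.truncate, List.length_append, List.length_singleton]
  split_ifs <;> omega

lemma admissible_truncate_quantize (hf : ChildSumLE f) (h0 : 0 ≤ f) (h1 : f [] ≤ 1) (s : ℕ) :
    Admissible s (truncate (quantize s f)) where
  root_le := by
    have : quantize s f [] ≤ s :=
      Nat.floor_le_of_le (mul_le_of_le_one_right s.cast_nonneg h1)
    unfold truncate
    split_ifs <;> omega
  childSumLE := (hf.quantize h0 s).truncate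
  length_lt t ht := by
    unfold truncate at ht ⊢
    split_ifs at ht ⊢ <;> simp_all

lemma sq_sub_approx_le_of_notMem {s : ℕ} (h0 : 0 ≤ f) (hs : 0 < s) {t : Node}
    (ht : t ∉ truncatedNodes s f) : (f t - approx s f t) ^ 2 ≤ 1 / s * f t := by
  have hs' : (0 : ℝ) < s := Nat.cast_pos.2 hs
  have hkeep : truncate (quantize s f) t = quantize s f t := if_pos (not_le.1 ht)
  have hlo := Nat.floor_le (mul_nonneg hs'.le (h0 t))
  have hhi := Nat.lt_floor_add_one ((s : ℝ) * f t)
  simp only [approx, hkeep, quantize] at hlo hhi ⊢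
  set e := f t - (⌊(s : ℝ) * f t⌋₊ : ℝ) / s
  have he0 : 0 ≤ e := by rw [sub_nonneg, div_le_iff₀ hs']; linarith
  have he1 : e ≤ 1 / s := by
    have : f t ≤ ((⌊(s : ℝ) * f t⌋₊ : ℝ) + 1) / s := by rw [le_div_iff₀ hs']; linarith
    rw [add_div] at this
    linarith
  have hef : e ≤ f t := sub_le_self _ (by positivity)
  nlinarith

lemma sq_sub_approx_le_of_prefix {s : ℕ} (hf : ChildSumLE f) (h0 : 0 ≤ f) (hs : 0 < s) {r u : Node}
    (hr : r ∈ truncatedNodes s f) (hru : r <+: u) :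
    (f u - approx s f u) ^ 2 ≤ (1 + r.length) / s * f u := by
  have hs' : (0 : ℝ) < s := Nat.cast_pos.2 hs
  have hfu : f u ≤ f r := hf.le_of_prefix h0 hru
  have hcu : quantize s f u ≤ u.length :=
    ((hf.quantize h0 s).le_of_prefix (fun _ => Nat.zero_le _) hru).trans
      (hr.trans hru.length_le)
  have hdrop : truncate (quantize s f) u = 0 := if_neg (not_lt.2 hcu)
  have hfr : f r ≤ (1 + r.length) / s := by
    rw [le_div_iff₀ hs', mul_comm]
    have := Nat.lt_floor_add_one ((s : ℝ) * f r)
    have : (quantize s f r : ℝ) ≤ r.length := Nat.cast_le.2 hr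
    simp only [quantize] at *
    linarith
  simp only [approx, hdrop, Nat.cast_zero, zero_div, sub_zero, sq]
  exact mul_le_mul_of_nonneg_right (hfu.trans hfr) (h0 u)

end Quantize

lemma ofReal_wgt_mul_le {β e a x : ℝ} (t : Node) (ha : 0 ≤ a) (h : e ≤ a * x) :
    ENNReal.ofReal (wgt β t * e)
      ≤ ENNReal.ofReal a * (ENNReal.ofReal (wgt β t) * ENNReal.ofReal x) := by
  have hw : 0 ≤ wgt β t := Real.rpow_nonneg (by positivity) _
  rw [← ENNReal.ofReal_mul hw, ← ENNReal.ofReal_mul ha]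
  exact ENNReal.ofReal_le_ofReal (by nlinarith)

section Error

variable {ν : Node → ℝ} (hν : 0 ≤ ν) (hsum : Summable ν) (hmass : ∑' t, ν t ≤ 1) {s : ℕ}
  (hs : 0 < s)
include hν hsum hmass

lemma subtreeMass_nil_le_one : subtreeMass (fun u => ENNReal.ofReal (ν u)) [] ≤ 1 := by
  rw [← ofReal_Vstar hν hsum, Vstar_nil]
  exact ENNReal.ofReal_le_one.2 hmass

include hs

lemma tsum_compl_truncatedNodes_le :
    ∑' t : ↥(truncatedNodes s (Vstar ν))ᶜ,
      ENNReal.ofReal (wgt 2 t * (Vstar ν t - approx s (Vstar ν) t) ^ 2)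
      ≤ ENNReal.ofReal (2 / s) := by
  set M := subtreeMass fun u => ENNReal.ofReal (ν u)
  calc _ ≤ ∑' t : ↥(truncatedNodes s (Vstar ν))ᶜ,
        ENNReal.ofReal (1 / s) * (ENNReal.ofReal (wgt 2 t) * M t) :=
        ENNReal.tsum_le_tsum fun t => by
          refine (ofReal_wgt_mul_le _ (by positivity)
            (sq_sub_approx_le_of_notMem (Vstar_nonneg hν) hs t.2)).trans_eq ?_
          rw [ofReal_Vstar hν hsum]
    _ ≤ ∑' t : Node, ENNReal.ofReal (1 / s) * (ENNReal.ofReal (wgt 2 t) * M t) :=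
        ENNReal.tsum_comp_le_tsum_of_injective Subtype.val_injective
          fun t => ENNReal.ofReal (1 / s) * (ENNReal.ofReal (wgt 2 t) * M t)
    _ = ENNReal.ofReal (1 / s) * ∑' t : Node, ENNReal.ofReal (wgt 2 t) * M t :=
        ENNReal.tsum_mul_left
    _ ≤ ENNReal.ofReal (1 / s) * (2 * 1) := by
        gcongr
        exact (tsum_wgt_mul_subtreeMass_le_two _).trans
          (by gcongr; exact subtreeMass_nil_le_one hν hsum hmass)
    _ = ENNReal.ofReal (2 / s) := by
        rw [mul_one, ← ENNReal.ofReal_ofNat 2, ← ENNReal.ofReal_mul (by positivity)]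
        ring_nf

lemma tsum_truncatedNodes_le :
    ∑' t : truncatedNodes s (Vstar ν),
      ENNReal.ofReal (wgt 2 t * (Vstar ν t - approx s (Vstar ν) t) ^ 2)
      ≤ ENNReal.ofReal (2 / s) := by
  set M := subtreeMass fun u => ENNReal.ofReal (ν u)
  set D := truncatedNodes s (Vstar ν)
  have hfactor : ∀ r : prefixMinimals D, ENNReal.ofReal ((1 + r.1.length) / s) *
      ENNReal.ofReal (2 / (1 + r.1.length)) = ENNReal.ofReal (2 / s) := fun r => by
    rw [← ENNReal.ofReal_mul (by positivity)]
    congr 1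
    field_simp
  calc _ ≤ ∑' (r : prefixMinimals D) (u : {u : Node // r.1 <+: u}),
        ENNReal.ofReal (wgt 2 u * (Vstar ν u - approx s (Vstar ν) u) ^ 2) :=
        tsum_subtype_le_tsum_prefixMinimals D
          fun u => ENNReal.ofReal (wgt 2 u * (Vstar ν u - approx s (Vstar ν) u) ^ 2)
    _ ≤ ∑' (r : prefixMinimals D), ENNReal.ofReal ((1 + r.1.length) / s) *
        ∑' u : {u : Node // r.1 <+: u}, ENNReal.ofReal (wgt 2 u) * M u := by
        refine ENNReal.tsum_le_tsum fun r => ?_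
        rw [← ENNReal.tsum_mul_left]
        refine ENNReal.tsum_le_tsum fun u => ?_
        refine (ofReal_wgt_mul_le _ (by positivity) (sq_sub_approx_le_of_prefix
          (childSumLE_Vstar hν hsum) (Vstar_nonneg hν) hs r.2.1 u.2)).trans_eq ?_
        rw [ofReal_Vstar hν hsum]
    _ ≤ ∑' (r : prefixMinimals D), ENNReal.ofReal ((1 + r.1.length) / s) *
        (ENNReal.ofReal (2 / (1 + r.1.length)) * M r) :=
        ENNReal.tsum_le_tsum fun r => by gcongr; exact tsum_wgt_mul_subtreeMass_le _ r
    _ = ENNReal.ofReal (2 / s) * ∑' r : prefixMinimals D, M r := by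
        rw [← ENNReal.tsum_mul_left]
        exact tsum_congr fun r => by rw [← mul_assoc, hfactor]
    _ ≤ ENNReal.ofReal (2 / s) * 1 := by
        gcongr
        exact (tsum_subtreeMass_prefixMinimals_le _ D).trans (subtreeMass_nil_le_one hν hsum hmass)
    _ = ENNReal.ofReal (2 / s) := mul_one _

lemma distSqW_Vstar_approx_le :
    distSqW 2 (Vstar ν) (approx s (Vstar ν)) ≤ ENNReal.ofReal (4 / s) := by
  rw [distSqW, ← ENNReal.summable.tsum_add_tsum_compl (s := truncatedNodes s (Vstar ν))
    ENNReal.summable]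
  calc _ ≤ ENNReal.ofReal (2 / s) + ENNReal.ofReal (2 / s) :=
        add_le_add (tsum_truncatedNodes_le hν hsum hmass hs)
          (tsum_compl_truncatedNodes_le hν hsum hmass hs)
    _ = ENNReal.ofReal (4 / s) := by
        rw [← ENNReal.ofReal_add (by positivity) (by positivity)]
        ring_nf

end Error

lemma distSqW_sub_sub_le (β : ℝ) (f₁ f₂ g₁ g₂ : Node → ℝ) :
    distSqW β (f₁ - f₂) (g₁ - g₂) ≤ 2 * distSqW β f₁ g₁ + 2 * distSqW β f₂ g₂ := by
  simp only [distSqW, ← ENNReal.tsum_mul_left, ← ENNReal.tsum_add]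
  refine ENNReal.tsum_le_tsum fun t => ?_
  have hw : 0 ≤ wgt β t := Real.rpow_nonneg (by positivity) _
  rw [← ENNReal.ofReal_ofNat 2, ← ENNReal.ofReal_mul zero_le_two, ← ENNReal.ofReal_mul zero_le_two,
    ← ENNReal.ofReal_add (by positivity) (by positivity)]
  refine ENNReal.ofReal_le_ofReal ?_
  simp only [Pi.sub_apply]
  nlinarith [sq_nonneg (f₁ t - g₁ t + (f₂ t - g₂ t))]

lemma summable_and_tsum_le_one_of_le_abs {μ ν : Node → ℝ} (hμ : MemL1 μ) (h1 : l1Norm μ ≤ 1)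
    (h0 : 0 ≤ ν) (hle : ∀ t, ν t ≤ |μ t|) : Summable ν ∧ ∑' t, ν t ≤ 1 :=
  have hs := Summable.of_nonneg_of_le h0 hle hμ
  ⟨hs, (hs.tsum_le_tsum hle hμ).trans h1⟩

lemma distSqW_Vstar_zero_le_two {μ : Node → ℝ} (hμ : MemL1 μ) (h1 : l1Norm μ ≤ 1) :
    distSqW 2 (Vstar μ) 0 ≤ 2 := by
  set ν : Node → ℝ := fun u => |μ u|
  have h0 : 0 ≤ ν := fun u => abs_nonneg (μ u)
  have hmass : ∑' t, ν t ≤ 1 := h1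
  have hle : ∀ t, (Vstar μ t - 0) ^ 2 ≤ 1 * Vstar ν t := fun t => by
    have hV : Vstar ν t ≤ 1 := ((childSumLE_Vstar h0 hμ).le_of_prefix (Vstar_nonneg h0)
      List.nil_prefix).trans (by rwa [Vstar_nil])
    have habs := abs_Vstar_le hμ t
    rw [sub_zero, one_mul, ← sq_abs]
    nlinarith [abs_nonneg (Vstar μ t)]
  calc distSqW 2 (Vstar μ) 0
      ≤ ∑' t, ENNReal.ofReal 1 * (ENNReal.ofReal (wgt 2 t) * ENNReal.ofReal (Vstar ν t)) :=
        ENNReal.tsum_le_tsum fun t => ofReal_wgt_mul_le t zero_le_one (hle t)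
    _ = ∑' t, ENNReal.ofReal (wgt 2 t) * subtreeMass (fun u => ENNReal.ofReal (ν u)) t := by
        simp only [ENNReal.ofReal_one, one_mul, ofReal_Vstar h0 hμ]
    _ ≤ 2 * 1 := (tsum_wgt_mul_subtreeMass_le_two _).trans
        (by gcongr; exact subtreeMass_nil_le_one h0 hμ hmass)
    _ = 2 := mul_one 2

lemma exists_cover (s : ℕ) (hs : 0 < s) :
    ∃ N : Finset (Node → ℝ), N.card ≤ 9 ^ (1 + 4 * s) ∧
      ∀ μ, MemL1 μ → l1Norm μ ≤ 1 → ∃ g ∈ N, distSqW 2 (Vstar μ) g ≤ ENNReal.ofReal (16 / s) := by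
  classical
  obtain ⟨F, hF, hcard⟩ := exists_finset_admissible s
  let scale : (Node → ℕ) → Node → ℝ := fun c t => c t / s
  refine ⟨Finset.image₂ (fun c c' => scale c - scale c') F F, ?_, fun μ hμ h1 => ?_⟩
  · calc _ ≤ F.card * F.card := Finset.card_image₂_le _ _ _
      _ ≤ 3 ^ (1 + 4 * s) * 3 ^ (1 + 4 * s) := Nat.mul_le_mul hcard hcard
      _ = 9 ^ (1 + 4 * s) := by rw [← mul_pow]; rfl
  have hpos := summable_and_tsum_le_one_of_le_abs hμ h1 (posPart_nonneg μ) fun t =>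
    (le_add_of_nonneg_right (negPart_nonneg _)).trans_eq (posPart_add_negPart (μ t))
  have hneg := summable_and_tsum_le_one_of_le_abs hμ h1 (negPart_nonneg μ) fun t =>
    (le_add_of_nonneg_left (posPart_nonneg _)).trans_eq (posPart_add_negPart (μ t))
  have hmem {ν : Node → ℝ} (h0 : 0 ≤ ν) (hν : Summable ν ∧ ∑' t, ν t ≤ 1) :
      truncate (quantize s (Vstar ν)) ∈ F :=
    hF _ (admissible_truncate_quantize (childSumLE_Vstar h0 hν.1) (Vstar_nonneg h0)
      (by rw [Vstar_nil]; exact hν.2) s)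
  have hsplit : Vstar μ = Vstar μ⁺ - Vstar μ⁻ := by
    rw [← Vstar_sub hpos.1 hneg.1, posPart_sub_negPart]
  refine ⟨approx s (Vstar μ⁺) - approx s (Vstar μ⁻),
    Finset.mem_image₂_of_mem (hmem (posPart_nonneg μ) hpos) (hmem (negPart_nonneg μ) hneg), ?_⟩
  calc distSqW 2 (Vstar μ) (approx s (Vstar μ⁺) - approx s (Vstar μ⁻))
      ≤ 2 * distSqW 2 (Vstar μ⁺) (approx s (Vstar μ⁺))
        + 2 * distSqW 2 (Vstar μ⁻) (approx s (Vstar μ⁻)) :=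
        hsplit ▸ distSqW_sub_sub_le 2 _ _ _ _
    _ ≤ 2 * ENNReal.ofReal (4 / s) + 2 * ENNReal.ofReal (4 / s) := by
        gcongr
        · exact distSqW_Vstar_approx_le (posPart_nonneg μ) hpos.1 hpos.2 hs
        · exact distSqW_Vstar_approx_le (negPart_nonneg μ) hneg.1 hneg.2 hs
    _ = ENNReal.ofReal (16 / s) := by
        rw [← ENNReal.ofReal_ofNat 2, ← ENNReal.ofReal_mul zero_le_two,
          ← ENNReal.ofReal_add (by positivity) (by positivity)]
        ring_nf

lemma sq_lt_mul_sq_of_mul_rpow_lt {C ε : ℝ} {n : ℕ} (hC : 0 ≤ C) (hn : 0 < n)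
    (h : C * (n : ℝ) ^ (-(1 : ℝ) / 2) < ε) : C ^ 2 < n * ε ^ 2 := by
  have hn' : (0 : ℝ) < n := Nat.cast_pos.2 hn
  rw [show -(1 : ℝ) / 2 = -(1 / 2) by ring, Real.rpow_neg hn'.le, ← Real.sqrt_eq_rpow,
    ← div_eq_mul_inv, div_lt_iff₀ (Real.sqrt_pos.2 hn')] at h
  calc C ^ 2 < (ε * √n) ^ 2 := pow_lt_pow_left₀ h hC two_ne_zero
    _ = n * ε ^ 2 := by rw [mul_pow, Real.sq_sqrt hn'.le, mul_comm]

lemma nine_pow_le_two_pow {s n : ℕ} (h : 16 * s + 5 ≤ n) : 9 ^ (1 + 4 * s) ≤ 2 ^ (n - 1) :=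
  calc 9 ^ (1 + 4 * s) ≤ 16 ^ (1 + 4 * s) := Nat.pow_le_pow_left (by norm_num) _
    _ = 2 ^ (4 * (1 + 4 * s)) := by rw [pow_mul]; rfl
    _ ≤ 2 ^ (n - 1) := Nat.pow_le_pow_right two_pos (by omega)

end TreeEntropy

open TreeEntropy

/-- Critical case `β = 2`: upper bound `e_n(V*) ≤ C n^{-1/2}` for the operator
`V* : ℓ₁(T) → ℓ₂(T,W)` with weight `w(t) = (1+|t|)^{-2}`: for every radius `ε`
exceeding the bound, the image of the unit ball of `ℓ₁(T)` under `V*` can be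
covered by `2^{n-1}` balls of radius `ε` in `ℓ₂(T,W)`. -/
theorem entropy_upper_bound_critical_Vstar :
    ∃ C : ℝ, 0 < C ∧ ∀ n : ℕ, 0 < n → ∀ ε : ℝ, C * (n : ℝ) ^ (-(1 : ℝ) / 2) < ε →
      ∃ N : Finset (Node → ℝ), N.card ≤ 2 ^ (n - 1) ∧
        ∀ μ : Node → ℝ, MemL1 μ → l1Norm μ ≤ 1 →
          ∃ g ∈ N, distSqW 2 (Vstar μ) g ≤ ENNReal.ofReal (ε ^ 2) := by
  refine ⟨20, by norm_num, fun n hn ε hε => ?_⟩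
  have hnε : 400 < n * ε ^ 2 := by linarith [sq_lt_mul_sq_of_mul_rpow_lt (by norm_num) hn hε]
  rcases le_or_gt 2 (ε ^ 2) with hbig | hsmall
  · refine ⟨{0}, by simpa using Nat.one_le_two_pow, fun μ hμ h1 => ⟨0, by simp, ?_⟩⟩
    exact (distSqW_Vstar_zero_le_two hμ h1).trans (by simpa using ENNReal.ofReal_le_ofReal hbig)
  have hε : 0 < ε ^ 2 := by nlinarith
  set s := ⌈16 / ε ^ 2⌉₊
  have hs : 16 / ε ^ 2 ≤ s := Nat.le_ceil _
  have hs' : (s : ℝ) < 16 / ε ^ 2 + 1 := Nat.ceil_lt_add_one (by positivity)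
  have hs0 : (0 : ℝ) < s := (by positivity : (0 : ℝ) < 16 / ε ^ 2).trans_le hs
  obtain ⟨N, hcard, hN⟩ := exists_cover s (Nat.cast_pos.1 hs0)
  have hsn : 16 * s + 5 ≤ n := by
    -- `(16 s + 5) ε² < 256 + 21 ε² < 298 < n ε²`
    have : ((16 * s + 5 : ℕ) : ℝ) * ε ^ 2 < n * ε ^ 2 := by
      push_cast
      rw [div_add_one hε.ne', lt_div_iff₀ hε] at hs'
      nlinarith
    exact_mod_cast (lt_of_mul_lt_mul_right this hε.le).le
  refine ⟨N, hcard.trans (nine_pow_le_two_pow hsn), fun μ hμ h1 => ?_⟩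
  obtain ⟨g, hg, hd⟩ := hN μ hμ h1
  rw [div_le_iff₀ hε] at hs
  exact ⟨g, hg, hd.trans (ENNReal.ofReal_le_ofReal ((div_le_iff₀ hs0).2 (by linarith)))⟩
end

section
/- Fix a positive integer n and μ ∈ ℓ₁(T) with ‖μ‖₁ ≤ 1, where T is the infinite binary tree. Let Υ^μ be the n-essential subtree of T: nodes are included starting from the root while ‖μ‖(t) > |t|/n, where ‖μ‖(t) = Σ_{u ⪰ t} |μ(u)|, and the construction is stopped at nodes where ‖μ‖(t) ≤ |t|/n. If Q denotes the set of terminal (leaf) nodes of Υ^μ, then Σ_{t∈Q} |t| ≤ n. Moreover, the total size of Υ^μ satisfies Σ_{l=1}^{∞} |Υ^μ ∩ T_l| ≤ n + 1, where T_l is the set of nodes of level l. -/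
/-!
Each terminal node `q` of `Υ^μ` satisfies `|q| < n ‖μ‖(q)`, and the terminal nodes form an
antichain for the prefix order, so the subtrees below them are disjoint and their variations add
up to at most `‖μ‖₁ ≤ 1`; this gives `Σ_{q ∈ Q} |q| ≤ n`. Every node of `Υ^μ` is a prefix of some
terminal node (levels are bounded by `n`), so a node at level `l + 1` is the length-`(l + 1)`
prefix of a terminal node `q` with `l < |q|`; counting these pairs level by level gives
`Σ_l |Υ^μ ∩ T_{l+1}| ≤ Σ_{q ∈ Q} |q| ≤ n`.
-/

open scoped ENNReal

/-- The variation of `μ` at `t`: `‖μ‖(t) = Σ_{u ⪰ t} |μ(u)|`. -/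
noncomputable def varAt (μ : Node → ℝ) (t : Node) : ℝ :=
  ∑' u : {u : Node // t <+: u}, |μ u.1|

/-- The `n`-essential subtree `Υ^μ`: starting from the root, a node is included
as long as `‖μ‖(t) > |t|/n`; the construction stops at nodes with `‖μ‖(t) ≤ |t|/n`.
Thus `t ∈ Υ^μ` iff every prefix `s` of `t` (including `t` itself) satisfies
`‖μ‖(s) > |s|/n`. -/
def essTree (n : ℕ) (μ : Node → ℝ) : Set Node :=
  {t : Node | ∀ s : Node, s <+: t → (s.length : ℝ) / (n : ℝ) < varAt μ s}

/-- The terminal (leaf) nodes of a subtree `Υ`: nodes of `Υ` none of whose children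
belongs to `Υ`. -/
def terminalNodes (Υ : Set Node) : Set Node :=
  {t : Node | t ∈ Υ ∧ ∀ b : Bool, t ++ [b] ∉ Υ}

theorem Nat.encard_Iio (m : ℕ) : (Set.Iio m).encard = m := by
  rw [← Finset.coe_range, Set.encard_coe_eq_coe_finsetCard, Finset.card_range]

theorem tsum_encard_lt_eq_tsum {α : Type*} (s : Set α) (f : α → ℕ) :
    ∑' l : ℕ, ((s ∩ {a | l < f a}).encard : ℝ≥0∞) = ∑' a : s, (f a : ℝ≥0∞) := by
  have hlevel (l : ℕ) : ((s ∩ {a | l < f a}).encard : ℝ≥0∞) =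
      ∑' a : s, {a | l < f a}.indicator 1 a := by
    rw [← ENNReal.tsum_set_one, tsum_subtype _ (fun _ => (1 : ℝ≥0∞)), tsum_subtype s,
      Set.indicator_indicator]
    rfl
  have hcount (a : α) : ∑' l : ℕ, {a | l < f a}.indicator (1 : α → ℝ≥0∞) a = f a := by
    rw [← ENat.toENNReal_coe, ← Nat.encard_Iio, ← ENNReal.tsum_set_one,
      tsum_subtype _ (fun _ => (1 : ℝ≥0∞))]
    rfl
  simp_rw [hlevel, ENNReal.tsum_comm (α := ℕ), hcount]

theorem ENat.toENNReal_tsum {ι : Type*} (f : ι → ℕ∞) :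
    ((∑' i, f i : ℕ∞) : ℝ≥0∞) = ∑' i, (f i : ℝ≥0∞) :=
  ENat.isClosedEmbedding_toENNReal.map_tsum f (g := ENat.toENNRealRingHom)

def IsSubtree (Υ : Set Node) : Prop :=
  ∀ ⦃s t : Node⦄, s <+: t → t ∈ Υ → s ∈ Υ

namespace IsSubtree

variable {Υ : Set Node}

theorem eq_of_mem_terminalNodes_of_prefix (hΥ : IsSubtree Υ) {t u : Node}
    (ht : t ∈ terminalNodes Υ) (hu : u ∈ Υ) (htu : t <+: u) : t = u := by
  obtain ⟨r, rfl⟩ := htu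
  cases r with
  | nil => simp
  | cons b r => exact absurd (hΥ ⟨r, by simp⟩ hu) (ht.2 b)

theorem isAntichain_terminalNodes (hΥ : IsSubtree Υ) :
    IsAntichain (· <+: ·) (terminalNodes Υ) :=
  fun _ ht _ hu hne htu => hne (hΥ.eq_of_mem_terminalNodes_of_prefix ht hu.1 htu)

end IsSubtree

section BoundedLevels

variable {Υ : Set Node} {N : ℕ}

theorem exists_mem_terminalNodes_prefix (hN : ∀ t ∈ Υ, t.length ≤ N) {t : Node} (ht : t ∈ Υ) :
    ∃ q ∈ terminalNodes Υ, t <+: q := by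
  induction hk : N - t.length generalizing t with
  | zero =>
    refine ⟨t, ⟨ht, fun b hb => ?_⟩, List.prefix_rfl⟩
    have := hN _ hb
    simp only [List.length_append, List.length_singleton] at this
    omega
  | succ k ih =>
    by_cases hleaf : ∀ b : Bool, t ++ [b] ∉ Υ
    · exact ⟨t, ⟨ht, hleaf⟩, List.prefix_rfl⟩
    push Not at hleaf
    obtain ⟨b, hb⟩ := hleaf
    obtain ⟨q, hq, hbq⟩ := ih hb (by simp only [List.length_append, List.length_singleton]; omega)
    exact ⟨q, hq, (List.prefix_append t [b]).trans hbq⟩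

/-- A node at level `l + 1` is the length-`(l + 1)` prefix of any terminal node above it,
so it is determined by that terminal node `q`, which has `l < |q|`. -/
theorem tsum_encard_level_le (hN : ∀ t ∈ Υ, t.length ≤ N) :
    ∑' l : ℕ, ((Υ ∩ {t : Node | t.length = l + 1}).encard : ℝ≥0∞) ≤
      ∑' q : terminalNodes Υ, (q.1.length : ℝ≥0∞) := by
  choose! q hq hprefix using fun t (ht : t ∈ Υ) => exists_mem_terminalNodes_prefix hN ht
  rw [← tsum_encard_lt_eq_tsum]
  refine ENNReal.tsum_le_tsum fun l => ENat.toENNReal_le.2 ?_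
  refine Set.encard_le_encard_of_injOn (f := q) ?_ ?_
  · rintro t ⟨ht, hl : t.length = l + 1⟩
    refine ⟨hq t ht, ?_⟩
    have := (hprefix t ht).length_le
    show l < (q t).length
    omega
  · rintro t ⟨ht, hl : t.length = l + 1⟩ t' ⟨ht', hl' : t'.length = l + 1⟩ hqt
    rw [List.prefix_iff_eq_take.1 (hprefix t ht), List.prefix_iff_eq_take.1 (hprefix t' ht'),
      hqt, hl, hl']

end BoundedLevels

theorem ofReal_l1Norm {μ : Node → ℝ} (hμ : MemL1 μ) :
    ENNReal.ofReal (l1Norm μ) = ∑' u, ENNReal.ofReal |μ u| :=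
  ENNReal.ofReal_tsum_of_nonneg (fun _ => abs_nonneg _) hμ

theorem ofReal_varAt {μ : Node → ℝ} (hμ : MemL1 μ) (t : Node) :
    ENNReal.ofReal (varAt μ t) = ∑' u : {u : Node // t <+: u}, ENNReal.ofReal |μ u| :=
  ENNReal.ofReal_tsum_of_nonneg (fun _ => abs_nonneg _) (hμ.subtype _)

theorem varAt_le_l1Norm {μ : Node → ℝ} (hμ : MemL1 μ) (t : Node) : varAt μ t ≤ l1Norm μ :=
  hμ.subtype _ |>.tsum_le_tsum_of_inj Subtype.val Subtype.coe_injective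
    (fun _ _ => abs_nonneg _) (fun _ => le_rfl) hμ

/-- The subtrees below the nodes of an antichain are disjoint. -/
theorem tsum_ofReal_varAt_le_of_isAntichain {μ : Node → ℝ} (hμ : MemL1 μ) {Q : Set Node}
    (hQ : IsAntichain (· <+: ·) Q) :
    ∑' t : Q, ENNReal.ofReal (varAt μ t) ≤ ENNReal.ofReal (l1Norm μ) := by
  have hinj : Function.Injective fun p : (Σ t : Q, {u : Node // t.1 <+: u}) => p.2.1 := by
    rintro ⟨⟨t, ht⟩, ⟨u, htu⟩⟩ ⟨⟨t', ht'⟩, ⟨u', htu'⟩⟩ (rfl : u = u')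
    obtain rfl : t = t' := by
      rcases List.prefix_or_prefix_of_prefix htu htu' with h | h
      · exact hQ.eq ht ht' h
      · exact (hQ.eq ht' ht h).symm
    rfl
  calc ∑' t : Q, ENNReal.ofReal (varAt μ t)
      = ∑' p : (Σ t : Q, {u : Node // t.1 <+: u}), ENNReal.ofReal |μ p.2.1| := by
        simp_rw [ofReal_varAt hμ, ENNReal.tsum_sigma']
    _ ≤ ∑' u, ENNReal.ofReal |μ u| :=
        ENNReal.tsum_comp_le_tsum_of_injective hinj fun u => ENNReal.ofReal |μ u|
    _ = ENNReal.ofReal (l1Norm μ) := (ofReal_l1Norm hμ).symm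

theorem isSubtree_essTree (n : ℕ) (μ : Node → ℝ) : IsSubtree (essTree n μ) :=
  fun _ _ hst ht r hr => ht r (hr.trans hst)

theorem length_lt_mul_varAt_of_mem_essTree {n : ℕ} (hn : 0 < n) {μ : Node → ℝ} {t : Node}
    (ht : t ∈ essTree n μ) : (t.length : ℝ) < n * varAt μ t := by
  have := ht t List.prefix_rfl
  rwa [div_lt_iff₀' (by exact_mod_cast hn)] at this

theorem length_lt_of_mem_essTree {n : ℕ} (hn : 0 < n) {μ : Node → ℝ} (hμ : MemL1 μ)
    (hμ1 : l1Norm μ ≤ 1) {t : Node} (ht : t ∈ essTree n μ) : t.length < n := by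
  have hvar : varAt μ t ≤ 1 := (varAt_le_l1Norm hμ t).trans hμ1
  have : (t.length : ℝ) < n :=
    calc (t.length : ℝ) < n * varAt μ t := length_lt_mul_varAt_of_mem_essTree hn ht
      _ ≤ n * 1 := by gcongr
      _ = n := mul_one _
  exact_mod_cast this

theorem tsum_length_le_of_isAntichain {n : ℕ} (hn : 0 < n) {μ : Node → ℝ} (hμ : MemL1 μ)
    {Q : Set Node} (hQ : IsAntichain (· <+: ·) Q) (hQΥ : Q ⊆ essTree n μ) :
    ∑' t : Q, (t.1.length : ℝ≥0∞) ≤ n * ENNReal.ofReal (l1Norm μ) := by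
  have hlength (t : Q) : (t.1.length : ℝ≥0∞) ≤ n * ENNReal.ofReal (varAt μ t) := by
    rw [← ENNReal.ofReal_natCast, ← ENNReal.ofReal_natCast n, ← ENNReal.ofReal_mul n.cast_nonneg]
    exact ENNReal.ofReal_le_ofReal (length_lt_mul_varAt_of_mem_essTree hn (hQΥ t.2)).le
  calc ∑' t : Q, (t.1.length : ℝ≥0∞)
      ≤ ∑' t : Q, n * ENNReal.ofReal (varAt μ t) := ENNReal.tsum_le_tsum hlength
    _ = n * ∑' t : Q, ENNReal.ofReal (varAt μ t) := ENNReal.tsum_mul_left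
    _ ≤ n * ENNReal.ofReal (l1Norm μ) := by
        gcongr
        exact tsum_ofReal_varAt_le_of_isAntichain hμ hQ

/-- Size bounds for the `n`-essential subtree: if `‖μ‖₁ ≤ 1`, then the terminal
nodes `Q` of `Υ^μ` satisfy `Σ_{t ∈ Q} |t| ≤ n`, and the total size satisfies
`Σ_{l=1}^∞ |Υ^μ ∩ T_l| ≤ n + 1`. -/
theorem essential_subtree_size (n : ℕ) (hn : 0 < n) (μ : Node → ℝ)
    (hμ : MemL1 μ) (hμ1 : l1Norm μ ≤ 1) :
    (∑' t : terminalNodes (essTree n μ), (t.1.length : ℝ≥0∞)) ≤ (n : ℝ≥0∞) ∧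
      (∑' l : ℕ, (essTree n μ ∩ {t : Node | t.length = l + 1}).encard) ≤ (n : ℝ≥0∞) + 1 := by
  have hterminal : ∑' t : terminalNodes (essTree n μ), (t.1.length : ℝ≥0∞) ≤ n :=
    calc ∑' t : terminalNodes (essTree n μ), (t.1.length : ℝ≥0∞)
        ≤ n * ENNReal.ofReal (l1Norm μ) :=
          tsum_length_le_of_isAntichain hn hμ (isSubtree_essTree n μ).isAntichain_terminalNodes
            fun _ ht => ht.1
      _ ≤ n := mul_le_of_le_one_right' (ENNReal.ofReal_le_one.2 hμ1)
  refine ⟨hterminal, ?_⟩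
  rw [ENat.toENNReal_tsum]
  calc _ ≤ ∑' t : terminalNodes (essTree n μ), (t.1.length : ℝ≥0∞) :=
        tsum_encard_level_le fun t ht => (length_lt_of_mem_essTree hn hμ hμ1 ht).le
    _ ≤ n := hterminal
    _ ≤ n + 1 := le_self_add
end

section
/- For every positive integer n, the number of sequences (q_l)_{l≥1} of nonnegative integers satisfying Σ_{l≥1} l·q_l ≤ n does not exceed (2e)ⁿ. -/
open scoped ENNReal
open Finset Nat

/-!
Such a sequence vanishes beyond `n` and has `q_l ≤ ⌊n/l⌋`, so it is determined by
`(q_1, …, q_n)`, which ranges over a box with `∏_{l ≤ n} (⌊n/l⌋ + 1)` points. Since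
`l (⌊n/l⌋ + 1) ≤ n + l`, this product is at most `∏_{l ≤ n} (n + l) / n! = C(2n, n) ≤ 4ⁿ ≤ (2e)ⁿ`.
-/

theorem Nat.prod_range_div_succ_add_one_le_choose (n k : ℕ) :
    ∏ i ∈ range k, (n / (i + 1) + 1) ≤ (n + k).choose k := by
  refine Nat.le_of_mul_le_mul_left ?_ k.factorial_pos
  calc k ! * ∏ i ∈ range k, (n / (i + 1) + 1)
      = ∏ i ∈ range k, (i + 1) * (n / (i + 1) + 1) := by
        rw [← prod_range_add_one_eq_factorial, ← prod_mul_distrib]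
    _ ≤ ∏ i ∈ range k, (n + 1 + i) := by
        gcongr with i
        linarith [Nat.mul_div_le n (i + 1)]
    _ = k ! * (n + k).choose k := by
        rw [← Nat.ascFactorial_eq_prod_range, Nat.ascFactorial_eq_factorial_mul_choose]

def weightBoundedSeqs (n : ℕ) : Set (ℕ → ℕ) :=
  {q | q 0 = 0 ∧ (∑' l : ℕ, ((l * q l : ℕ) : ℝ≥0∞)) ≤ n}

namespace weightBoundedSeqs

variable {n : ℕ} {q : ℕ → ℕ}

lemma mul_le (hq : q ∈ weightBoundedSeqs n) (l : ℕ) : l * q l ≤ n := by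
  exact_mod_cast (ENNReal.le_tsum l).trans hq.2

lemma eq_zero_of_lt (hq : q ∈ weightBoundedSeqs n) {l : ℕ} (hl : n < l) : q l = 0 := by
  by_contra h
  have := mul_le hq l
  nlinarith [Nat.one_le_iff_ne_zero.mpr h]

lemma encard_le_prod (n : ℕ) :
    (weightBoundedSeqs n).encard ≤ ∏ i ∈ range n, (n / (i + 1) + 1) := by
  let head (q : ℕ → ℕ) (i : Fin n) : ℕ := q (i + 1)
  have maps : Set.MapsTo head (weightBoundedSeqs n)
      (Fintype.piFinset fun i : Fin n => range (n / (i + 1) + 1)) := by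
    intro q hq
    simp only [mem_coe, Fintype.mem_piFinset, mem_range]
    intro i
    exact Nat.lt_succ_of_le <| (Nat.le_div_iff_mul_le (Nat.succ_pos i)).mpr <|
      (mul_comm _ _).trans_le (mul_le hq (i + 1))
  have inj : Set.InjOn head (weightBoundedSeqs n) := by
    intro q hq q' hq' h
    funext l
    rcases l with _ | l
    · rw [hq.1, hq'.1]
    rcases lt_or_ge l n with hl | hl
    · exact congrFun h ⟨l, hl⟩
    · rw [eq_zero_of_lt hq (by omega), eq_zero_of_lt hq' (by omega)]
  calc (weightBoundedSeqs n).encard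
      ≤ (Fintype.piFinset fun i : Fin n => range (n / (i + 1) + 1) : Set (Fin n → ℕ)).encard :=
        Set.encard_le_encard_of_injOn maps inj
    _ = ∏ i ∈ range n, (n / (i + 1) + 1) := by
        rw [Set.encard_coe_eq_coe_finsetCard, Fintype.card_piFinset]
        simp [Fin.prod_univ_eq_prod_range (fun i => n / (i + 1) + 1)]

end weightBoundedSeqs

theorem count_sequences_le_general (n : ℕ) :
    {q : ℕ → ℕ | q 0 = 0 ∧ (∑' l : ℕ, ((l * q l : ℕ) : ℝ≥0∞)) ≤ (n : ℝ≥0∞)}.encard ≤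
      ENNReal.ofReal ((2 * Real.exp 1) ^ n) := by
  have card_le : (weightBoundedSeqs n).encard ≤ (4 ^ n : ℕ) := by
    refine (weightBoundedSeqs.encard_le_prod n).trans (Nat.cast_le.mpr ?_)
    calc ∏ i ∈ range n, (n / (i + 1) + 1) ≤ (n + n).choose n :=
          Nat.prod_range_div_succ_add_one_le_choose n n
      _ = n.centralBinom := by rw [Nat.centralBinom_eq_two_mul_choose, two_mul]
      _ ≤ 4 ^ n := Nat.centralBinom_le_four_pow n
  have four_le : (4 : ℝ) ≤ 2 * Real.exp 1 := by linarith [Real.exp_one_gt_d9]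
  calc _ ≤ (((4 ^ n : ℕ) : ℕ∞) : ℝ≥0∞) := by exact_mod_cast card_le
    _ = ENNReal.ofReal (4 ^ n) := by norm_num
    _ ≤ ENNReal.ofReal ((2 * Real.exp 1) ^ n) := by gcongr

/-- The number of sequences `(q_l)_{l ≥ 1}` of nonnegative integers with
`Σ_{l ≥ 1} l·q_l ≤ n` does not exceed `(2e)ⁿ`. (A sequence indexed by `l ≥ 1`
is encoded as `q : ℕ → ℕ` with `q 0 = 0`; the `l = 0` term of the sum vanishes.) -/
theorem count_sequences_le (n : ℕ) (hn : 0 < n) :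
    {q : ℕ → ℕ | q 0 = 0 ∧ (∑' l : ℕ, ((l * q l : ℕ) : ℝ≥0∞)) ≤ (n : ℝ≥0∞)}.encard ≤
      ENNReal.ofReal ((2 * Real.exp 1) ^ n) :=
  count_sequences_le_general n
end

section
/- (Approximation Lemma.) Let X, Y be normed spaces, Γ a nonempty finite index set, and V, (V_γ)_{γ∈Γ} bounded linear operators from X to Y. Then for any positive integer n, e_{n+⌊log₂|Γ|⌋+1}(V) ≤ sup_{γ∈Γ} e_n(V_γ) + sup_{x∈B_X} inf_{γ∈Γ} ‖Vx − V_γ x‖_Y, where B_X = {x ∈ X : ‖x‖_X ≤ 1}. -/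
open scoped ENNReal

/-- The `n`-th dyadic entropy number of a bounded linear operator `V : X → Y`:
the infimum (in `ℝ≥0∞`, so `⊤` if no finite covering exists) of those `ε` such
that the image of the closed unit ball of `X` under `V` can be covered by
`2^{n-1}` closed balls of radius `ε` in `Y`. -/
noncomputable def entropyNumber {X Y : Type*} [NormedAddCommGroup X] [NormedSpace ℝ X]
    [NormedAddCommGroup Y] [NormedSpace ℝ Y] (n : ℕ) (V : X →L[ℝ] Y) : ℝ≥0∞ :=
  sInf {ε : ℝ≥0∞ | ∃ N : Finset Y, N.card ≤ 2 ^ (n - 1) ∧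
    ∀ x : X, ‖x‖ ≤ 1 → ∃ y ∈ N, edist (V x) y ≤ ε}

/-- Approximation Lemma: if `V` is approximated by a finite family `(V_γ)_{γ ∈ Γ}`
in the sense that each `Vx` (for `x` in the unit ball) is close to `V_γ x` for a
suitable `γ = γ(x)`, then
`e_{n+⌊log₂|Γ|⌋+1}(V) ≤ sup_γ e_n(V_γ) + sup_{‖x‖ ≤ 1} inf_γ ‖Vx - V_γ x‖`. -/
theorem entropy_approximation_lemma {X Y : Type*} [NormedAddCommGroup X] [NormedSpace ℝ X]
    [NormedAddCommGroup Y] [NormedSpace ℝ Y] (Γ : Type*) [Fintype Γ] [Nonempty Γ]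
    (V : X →L[ℝ] Y) (Vf : Γ → X →L[ℝ] Y) (n : ℕ) (hn : 0 < n) :
    entropyNumber (n + Nat.log 2 (Fintype.card Γ) + 1) V ≤
      (⨆ γ : Γ, entropyNumber n (Vf γ)) +
        ⨆ x : {x : X // ‖x‖ ≤ 1}, ⨅ γ : Γ, edist (V x.1) (Vf γ x.1) := by
  classical
  set E := ⨆ γ : Γ, entropyNumber n (Vf γ) with hE
  set D := ⨆ x : {x : X // ‖x‖ ≤ 1}, ⨅ γ : Γ, edist (V x.1) (Vf γ x.1) with hD
  have key : ∀ ε : ℝ≥0∞, E < ε →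
      entropyNumber (n + Nat.log 2 (Fintype.card Γ) + 1) V ≤ ε + D := by
    intro ε hε
    have hγ : ∀ γ : Γ, ∃ N : Finset Y, N.card ≤ 2 ^ (n - 1) ∧
        ∀ x : X, ‖x‖ ≤ 1 → ∃ y ∈ N, edist (Vf γ x) y ≤ ε := by
      intro γ
      have h1 : entropyNumber n (Vf γ) < ε := by
        refine lt_of_le_of_lt ?_ hε
        rw [hE]; exact le_iSup (fun γ : Γ => entropyNumber n (Vf γ)) γ
      obtain ⟨a, ⟨N, hc, hcov⟩, ha⟩ := sInf_lt_iff.mp h1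
      refine ⟨N, hc, fun x hx => ?_⟩
      obtain ⟨y, hy, hd⟩ := hcov x hx
      exact ⟨y, hy, hd.trans ha.le⟩
    choose Nf hNc hNcov using hγ
    refine sInf_le ⟨Finset.univ.biUnion Nf, ?_, ?_⟩
    · calc (Finset.univ.biUnion Nf).card ≤ ∑ γ, (Nf γ).card := Finset.card_biUnion_le
        _ ≤ ∑ _γ : Γ, 2 ^ (n - 1) := Finset.sum_le_sum fun γ _ => hNc γ
        _ = Fintype.card Γ * 2 ^ (n - 1) := by
            rw [Finset.sum_const, Finset.card_univ, smul_eq_mul]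
        _ ≤ 2 ^ (Nat.log 2 (Fintype.card Γ) + 1) * 2 ^ (n - 1) :=
            Nat.mul_le_mul_right _ (Nat.lt_pow_succ_log_self (by norm_num) _).le
        _ = 2 ^ (n + Nat.log 2 (Fintype.card Γ) + 1 - 1) := by
            rw [← pow_add]; congr 1; omega
    · intro x hx
      obtain ⟨γ, hγ⟩ := exists_eq_ciInf_of_finite (f := fun γ : Γ => edist (V x) (Vf γ x))
      obtain ⟨y, hy, hd⟩ := hNcov γ x hx
      refine ⟨y, Finset.mem_biUnion.mpr ⟨γ, Finset.mem_univ _, hy⟩, ?_⟩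
      have h2 : edist (V x) (Vf γ x) ≤ D := by
        rw [hγ, hD]
        exact le_iSup (fun x : {x : X // ‖x‖ ≤ 1} => ⨅ γ : Γ, edist (V x.1) (Vf γ x.1)) ⟨x, hx⟩
      calc edist (V x) y ≤ edist (V x) (Vf γ x) + edist (Vf γ x) y := edist_triangle _ _ _
        _ ≤ D + ε := add_le_add h2 hd
        _ = ε + D := add_comm _ _
  rcases eq_top_or_lt_top (E + D) with h | h
  · rw [h]; exact le_top
  · have hEt : E ≠ ⊤ := fun h' => by simp [h'] at h
    refine ENNReal.le_of_forall_pos_le_add fun δ hδ _ => ?_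
    have h3 := key (E + δ) (ENNReal.lt_add_right hEt (by exact_mod_cast hδ.ne'))
    calc entropyNumber (n + Nat.log 2 (Fintype.card Γ) + 1) V ≤ (E + δ) + D := h3
      _ = E + D + δ := by ring
end

section
/- Let T be the infinite binary tree with nonnegative weight w, and let Υ ⊂ T be a finite subtree. Define the flush-projection P_Υ : ℓ₁(T) → ℓ₁(Υ) by (P_Υ μ)(t) = μ(t) + Σ_{u∈Z(t)} μ(u), where for s ∉ Υ, z(s) is the last node of Υ on the branch from the root to s and Z(t) = z^{-1}(t); define V*_Υ : ℓ₁(Υ) → ℓ₂(Υ,W) by (V*_Υ ν)(t) = Σ_{u∈O(t)∩Υ} ν(u), and the embedding ι_Υ : ℓ₂(Υ,W) → ℓ₂(T,W) by extension by zero. Set A_Υ = ι_Υ V*_Υ P_Υ. Then for every μ ∈ ℓ₁(T): (i) (V*μ)(t) = (A_Υ μ)(t) for all t ∈ Υ, and (ii) ‖(V* − A_Υ)μ‖²_{2,W} = Σ_{t∉Υ} s_μ(t)² w(t), where (V*μ)(t) = s_μ(t) = Σ_{u⪰t} μ(u). -/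
open scoped ENNReal

/-- `lastIn Υ t s` says that `t` is the last node of `Υ` on the branch from the
root to `s`: `t ∈ Υ`, `t` is a prefix of `s`, and every prefix of `s` lying in `Υ`
is a prefix of `t`. -/
def lastIn (Υ : Set Node) (t s : Node) : Prop :=
  t ∈ Υ ∧ t <+: s ∧ ∀ u : Node, u ∈ Υ → u <+: s → u <+: t

/-- The flush-projection `P_Υ : ℓ₁(T) → ℓ₁(Υ)`:
`(P_Υ μ)(t) = μ(t) + Σ_{s ∈ Z(t)} μ(s)`, where `Z(t) = z⁻¹(t)` consists of those
`s ∉ Υ` whose last `Υ`-ancestor `z(s)` equals `t`. -/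
noncomputable def flushProj (Υ : Set Node) (μ : Node → ℝ) (t : Node) : ℝ :=
  μ t + ∑' s : {s : Node // s ∉ Υ ∧ lastIn Υ t s}, μ s.1

/-- The restricted summation operator `V*_Υ : ℓ₁(Υ) → ℓ₂(Υ,W)`:
`(V*_Υ ν)(t) = Σ_{u ∈ O(t) ∩ Υ} ν(u)`. -/
noncomputable def VstarSub (Υ : Set Node) (ν : Node → ℝ) (t : Node) : ℝ :=
  ∑' u : {u : Node // t <+: u ∧ u ∈ Υ}, ν u.1

/-- The approximating operator `A_Υ = ι_Υ V*_Υ P_Υ : ℓ₁(T) → ℓ₂(T,W)`, where `ι_Υ`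
is the extension by zero. -/
noncomputable def approxOp (Υ : Set Node) (μ : Node → ℝ) (t : Node) : ℝ :=
  Set.indicator Υ (VstarSub Υ (flushProj Υ μ)) t

/-! For `t ∈ Υ`, every descendant `s ∉ Υ` of `t` has a unique last `Υ`-ancestor `z(s)`, which
again descends from `t`. So the mass that `P_Υ` flushes into the nodes of `O(t) ∩ Υ` is exactly
the mass of `O(t) \ Υ`, and `A_Υ μ` agrees with `V*μ` on `Υ`; off `Υ` it vanishes. -/

open Classical in
noncomputable def lastAncestor (Υ : Set Node) (s : Node) : Node :=
  s.take (Nat.findGreatest (fun k => s.take k ∈ Υ) s.length)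

theorem Vstar_eq_add {μ : Node → ℝ} (hμ : Summable μ) (Υ : Set Node) (t : Node) :
    Vstar μ t = (∑' u : {u : Node // t <+: u ∧ u ∈ Υ}, μ u) +
      ∑' s : {s : Node // t <+: s ∧ s ∉ Υ}, μ s := by
  have hsplit : {u : Node | t <+: u} =
      {u : Node | t <+: u ∧ u ∈ Υ} ∪ {s : Node | t <+: s ∧ s ∉ Υ} := by
    ext u; by_cases u ∈ Υ <;> simp [*]
  rw [Vstar]
  exact (tsum_congr_set_coe μ hsplit).trans <|
    Summable.tsum_union_disjoint (Set.disjoint_left.mpr fun _ h h' => h'.2 h.2)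
      (hμ.subtype _) (hμ.subtype _)

section

variable {Υ : Set Node}

theorem lastIn_lastAncestor (hroot : ([] : Node) ∈ Υ) (s : Node) :
    lastIn Υ (lastAncestor Υ s) s := by
  classical
  refine ⟨Nat.findGreatest_spec (P := fun k => s.take k ∈ Υ) (Nat.zero_le _)
    (by simpa using hroot), List.take_prefix _ _, ?_⟩
  intro u hu hus
  rw [List.prefix_iff_eq_take.mp hus, lastAncestor, List.take_isPrefix_take]
  left
  exact Nat.le_findGreatest hus.length_le (by rwa [← List.prefix_iff_eq_take.mp hus])

theorem lastIn.unique {u v s : Node} (hu : lastIn Υ u s) (hv : lastIn Υ v s) : u = v :=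
  (hv.2.2 u hu.1 hu.2.1).eq_of_length
    (le_antisymm (hv.2.2 u hu.1 hu.2.1).length_le (hu.2.2 v hv.1 hv.2.1).length_le)

/-- `O(t) \ Υ` is the disjoint union of the sets `Z(u)`, `u ∈ O(t) ∩ Υ`. -/
noncomputable def flushEquiv (hroot : ([] : Node) ∈ Υ) {t : Node} (ht : t ∈ Υ) :
    (Σ u : {u : Node // t <+: u ∧ u ∈ Υ}, {s : Node // s ∉ Υ ∧ lastIn Υ u.1 s}) ≃
      {s : Node // t <+: s ∧ s ∉ Υ} :=
  Equiv.ofBijective (fun p => ⟨p.2.1, p.1.2.1.trans p.2.2.2.2.1, p.2.2.1⟩) <| by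
    constructor
    · rintro ⟨⟨u, hu⟩, ⟨s, hs⟩⟩ ⟨⟨v, hv⟩, ⟨r, hr⟩⟩ h
      obtain rfl : s = r := congrArg Subtype.val h
      obtain rfl : u = v := lastIn.unique hs.2 hr.2
      rfl
    · rintro ⟨s, hts, hs⟩
      have hz := lastIn_lastAncestor hroot s
      exact ⟨⟨⟨lastAncestor Υ s, hz.2.2 t ht hts, hz.1⟩, ⟨s, hs, hz⟩⟩, rfl⟩

variable {μ : Node → ℝ}

theorem hasSum_tsum_lastIn (hμ : Summable μ) (hroot : ([] : Node) ∈ Υ) {t : Node}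
    (ht : t ∈ Υ) :
    HasSum (fun u : {u : Node // t <+: u ∧ u ∈ Υ} =>
        ∑' s : {s : Node // s ∉ Υ ∧ lastIn Υ u.1 s}, μ s)
      (∑' s : {s : Node // t <+: s ∧ s ∉ Υ}, μ s) := by
  have hsigma := ((flushEquiv hroot ht).hasSum_iff
    (f := fun s : {s : Node // t <+: s ∧ s ∉ Υ} => μ s)).mpr (hμ.subtype _).hasSum
  exact hsigma.sigma fun u => (hμ.subtype _).hasSum

theorem VstarSub_flushProj (hμ : Summable μ) (hroot : ([] : Node) ∈ Υ) {t : Node}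
    (ht : t ∈ Υ) :
    VstarSub Υ (flushProj Υ μ) t = (∑' u : {u : Node // t <+: u ∧ u ∈ Υ}, μ u) +
      ∑' s : {s : Node // t <+: s ∧ s ∉ Υ}, μ s := by
  have hflush := hasSum_tsum_lastIn hμ hroot ht
  rw [VstarSub, ← hflush.tsum_eq]
  exact (hμ.subtype _).tsum_add hflush.summable

theorem Vstar_eq_approxOp (hμ : Summable μ) (hroot : ([] : Node) ∈ Υ) {t : Node}
    (ht : t ∈ Υ) : Vstar μ t = approxOp Υ μ t := by
  rw [approxOp, Set.indicator_of_mem ht, VstarSub_flushProj hμ hroot ht, Vstar_eq_add hμ Υ]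

end

theorem tsum_ofReal_mul_sub_sq_eq_of_eqOn {α : Type*} {w f g : α → ℝ} {s : Set α}
    (hfg : Set.EqOn f g s) (hg : ∀ t ∉ s, g t = 0) :
    (∑' t, ENNReal.ofReal (w t * (f t - g t) ^ 2)) =
      ∑' t : {t // t ∉ s}, ENNReal.ofReal (w t * f t ^ 2) := by
  refine (tsum_congr fun t => ?_).trans
    (tsum_subtype sᶜ fun t => ENNReal.ofReal (w t * f t ^ 2)).symm
  by_cases ht : t ∈ s
  · simp [ht, hfg ht]
  · simp [ht, hg t ht]

theorem approx_operator_properties_general (w : Node → ℝ)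
    (Υ : Set Node) (hroot : ([] : Node) ∈ Υ)
    (μ : Node → ℝ) (hμ : MemL1 μ) :
    (∀ t ∈ Υ, Vstar μ t = approxOp Υ μ t) ∧
      (∑' t : Node, ENNReal.ofReal (w t * (Vstar μ t - approxOp Υ μ t) ^ 2)) =
        ∑' t : {t : Node // t ∉ Υ}, ENNReal.ofReal (w t.1 * Vstar μ t.1 ^ 2) := by
  have hV : ∀ t ∈ Υ, Vstar μ t = approxOp Υ μ t := fun _ => Vstar_eq_approxOp hμ.of_abs hroot
  exact ⟨hV, tsum_ofReal_mul_sub_sq_eq_of_eqOn hV fun t ht => Set.indicator_of_notMem ht _⟩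

/-- For a finite subtree `Υ` and `μ ∈ ℓ₁(T)`:
(i) `(V*μ)(t) = (A_Υ μ)(t)` for every `t ∈ Υ`, and
(ii) `‖(V* - A_Υ)μ‖²_{2,W} = Σ_{t ∉ Υ} s_μ(t)² w(t)`. -/
theorem approx_operator_properties (w : Node → ℝ) (hw : ∀ t : Node, 0 ≤ w t)
    (Υ : Set Node) (hfin : Υ.Finite) (hroot : ([] : Node) ∈ Υ)
    (hsub : ∀ t u : Node, t <+: u → u ∈ Υ → t ∈ Υ)
    (μ : Node → ℝ) (hμ : MemL1 μ) :
    (∀ t ∈ Υ, Vstar μ t = approxOp Υ μ t) ∧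
      (∑' t : Node, ENNReal.ofReal (w t * (Vstar μ t - approxOp Υ μ t) ^ 2)) =
        ∑' t : {t : Node // t ∉ Υ}, ENNReal.ofReal (w t.1 * Vstar μ t.1 ^ 2) :=
  approx_operator_properties_general w Υ hroot μ hμ
end
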